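/- arXiv:1410.7564 — 10 statements merged into one kernel-verified Lean document; each statement's English description precedes it below -/
import Mathlib

section
/- An element x of the algebra B'(λ,β) satisfies x∘x = 0 (i.e., x is an absolute nilpotent element) if and only if x lies in the linear span of the basis vector ab. -/
/-- The multiplication of the generalized ABO-blood type algebra `B'(l, β)` on `ℝ⁴`,
with ordered basis `o = e₀`, `a = e₁`, `b = e₂`, `ab = e₃`, determined by bilinearity,
commutativity and: `o∘o = o`, `o∘a = l•a`, `o∘b = l•b`, `a∘a = a`, `b∘b = b`,
`a∘b = ((l-β)/l)•a + ((l+β-1)/l)•b + ab`, `o∘ab = a∘ab = b∘ab = ab∘ab = 0`. -/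
noncomputable def Bmul (l β : ℝ) (x y : Fin 4 → ℝ) : Fin 4 → ℝ :=
  ![x 0 * y 0,
    l * (x 0 * y 1 + x 1 * y 0) + x 1 * y 1 + (l - β) / l * (x 1 * y 2 + x 2 * y 1),
    l * (x 0 * y 2 + x 2 * y 0) + x 2 * y 2 + (l + β - 1) / l * (x 1 * y 2 + x 2 * y 1),
    x 1 * y 2 + x 2 * y 1]

/-- The basis vector `o`. -/
noncomputable def vo : Fin 4 → ℝ := ![1, 0, 0, 0]
/-- The basis vector `a`. -/
noncomputable def va : Fin 4 → ℝ := ![0, 1, 0, 0]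
/-- The basis vector `b`. -/
noncomputable def vb : Fin 4 → ℝ := ![0, 0, 1, 0]
/-- The basis vector `ab`. -/
noncomputable def vab : Fin 4 → ℝ := ![0, 0, 0, 1]

/-- An element `x` of `B'(l, β)` satisfies `x ∘ x = 0` (i.e. `x` is an absolute nilpotent
element) if and only if `x` lies in the linear span of the basis vector `ab`. -/
theorem stmt_0 (l β : ℝ) (hl0 : 0 < l) (hl1 : l < 1) (hβ0 : 0 < β) (hβ1 : β < 1)
    (x : Fin 4 → ℝ) :
    Bmul l β x x = 0 ↔ x ∈ Submodule.span ℝ ({vab} : Set (Fin 4 → ℝ)) := by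
  rw [Submodule.mem_span_singleton]
  constructor
  · intro h
    have h0 := congrFun h 0
    have h1 := congrFun h 1
    have h2 := congrFun h 2
    have h3 := congrFun h 3
    simp [Bmul, vab] at h0 h1 h2 h3
    have hx0 : x 0 = 0 := by nlinarith [sq_nonneg (x 0)]
    rw [hx0, h3] at h1 h2
    simp [mul_self_eq_zero] at h1 h2
    have hx1 : x 1 = 0 := h1
    have hx2 : x 2 = 0 := h2
    refine ⟨x 3, ?_⟩
    funext i
    fin_cases i <;> simp [vab, hx0, hx1, hx2]
  · rintro ⟨c, rfl⟩
    funext i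
    fin_cases i <;> simp [Bmul, vab]
end

section
/- The algebra B'(λ,β) admits a solvable element of solvability index n for some n ≥ 3 if and only if (λ,β) ∈ P. -/
/-- The set `P` of parameters: `0 < l ≤ 1/3` and `β = (1 ± √((1-l)(1-3l)))/2`. -/
def memP (l β : ℝ) : Prop :=
  0 < l ∧ l ≤ 1 / 3 ∧
    (β = (1 + Real.sqrt ((1 - l) * (1 - 3 * l))) / 2 ∨
     β = (1 - Real.sqrt ((1 - l) * (1 - 3 * l))) / 2)

/-- `plen l β m k` is the `(k+1)`-st plenary power `m^[k+1]`:
`m^[1] = m` and `m^[k+1] = m^[k] ∘ m^[k]`. -/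
noncomputable def plen (l β : ℝ) (m : Fin 4 → ℝ) : ℕ → Fin 4 → ℝ
  | 0 => m
  | k + 1 => Bmul l β (plen l β m k) (plen l β m k)

/-- `m` is solvable of (exact) solvability index `n`: `m^[n] = 0` and `m^[k] ≠ 0`
for all `1 ≤ k < n`. -/
noncomputable def SolvableOfIndex (l β : ℝ) (m : Fin 4 → ℝ) (n : ℕ) : Prop :=
  plen l β m (n - 1) = 0 ∧ ∀ k, 1 ≤ k → k < n → plen l β m (k - 1) ≠ 0

/-! The `o`-coordinate of `m^[k+1]` is `m₀ ^ 2 ^ k`, so a solvable element lies in the ideal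
spanned by `a, b, ab`, where squaring reads
`(x₁, x₂, x₃) ↦ (x₁ (l x₁ + 2(l-β) x₂) / l, x₂ (l x₂ + 2(l+β-1) x₁) / l, 2 x₁ x₂)`;
in particular `x ∘ x = 0` iff `x₁ = x₂ = 0`. An element of index `n ≥ 3` therefore has a plenary
power `p` with `p₁ p₂ ≠ 0` and `p ∘ p ∈ ℝ ab`, i.e. `(p₁, p₂)` is a nonzero solution of a
`2 × 2` linear system, whose determinant is `(2β-1)² - (1-l)(1-3l)`; its vanishing describes `P`.
Conversely, a nonzero solution of that system is an element of index exactly `3`. -/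

variable {l β : ℝ}

lemma Bmul_self_of_apply_zero (hl : l ≠ 0) {x : Fin 4 → ℝ} (hx : x 0 = 0) :
    Bmul l β x x = ![0, x 1 * (l * x 1 + 2 * (l - β) * x 2) / l,
      x 2 * (l * x 2 + 2 * (l + β - 1) * x 1) / l, 2 * x 1 * x 2] := by
  funext i
  fin_cases i <;>
    simp only [Bmul, hx, mul_zero, zero_mul, add_zero, zero_add, Fin.zero_eta, Fin.mk_one,
      Fin.reduceFinMk, Matrix.cons_val_zero, Matrix.cons_val_one, Matrix.cons_val] <;>
    field_simp <;> ring

lemma Bmul_self_eq_zero_iff {x : Fin 4 → ℝ} (hx : x 0 = 0) :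
    Bmul l β x x = 0 ↔ x 1 = 0 ∧ x 2 = 0 := by
  constructor
  · intro h
    have h12 : x 1 * x 2 = 0 := by
      have := congrFun h 3
      simp only [Bmul, Matrix.cons_val, Pi.zero_apply] at this
      linear_combination this / 2
    have h1 := congrFun h 1
    have h2 := congrFun h 2
    simp only [Bmul, hx, mul_zero, zero_mul, add_zero, zero_add, mul_comm (x 2) (x 1), h12,
      Matrix.cons_val_one, Matrix.cons_val_zero, Matrix.cons_val, Pi.zero_apply, mul_eq_zero,
      or_self] at h1 h2
    exact ⟨h1, h2⟩
  · rintro ⟨h1, h2⟩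
    funext i
    fin_cases i <;> simp [Bmul, hx, h1, h2]

lemma plen_apply_zero (m : Fin 4 → ℝ) (k : ℕ) : plen l β m k 0 = m 0 ^ 2 ^ k := by
  induction k with
  | zero => simp [plen]
  | succ k ih => simp [plen, Bmul, ih, pow_succ, pow_mul]

lemma plen_plen (m : Fin 4 → ℝ) (j k : ℕ) :
    plen l β (plen l β m j) k = plen l β m (j + k) := by
  induction k with
  | zero => rfl
  | succ k ih => rw [plen, ih]; rfl

lemma SolvableOfIndex.plen {m : Fin 4 → ℝ} {j n : ℕ} (hn : 1 ≤ n)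
    (h : SolvableOfIndex l β m (j + n)) : SolvableOfIndex l β (plen l β m j) n := by
  obtain ⟨hzero, hne⟩ := h
  refine ⟨?_, fun k hk1 hkn => ?_⟩
  · rw [plen_plen, ← Nat.add_sub_assoc hn]
    exact hzero
  · rw [plen_plen, ← Nat.add_sub_assoc hk1]
    exact hne (j + k) (by omega) (by omega)

lemma solvableOfIndex_three_iff {p : Fin 4 → ℝ} :
    SolvableOfIndex l β p 3 ↔
      p 0 = 0 ∧ Bmul l β p p ≠ 0 ∧ Bmul l β (Bmul l β p p) (Bmul l β p p) = 0 := by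
  have hp2 : plen l β p 2 = Bmul l β (Bmul l β p p) (Bmul l β p p) := rfl
  constructor
  · rintro ⟨hzero, hne⟩
    have hp0 : p 0 ^ 4 = 0 := by simpa [plen_apply_zero] using congrFun hzero 0
    exact ⟨pow_eq_zero_iff (by norm_num) |>.1 hp0, hne 2 (by norm_num) (by norm_num),
      hp2 ▸ hzero⟩
  · rintro ⟨-, hsq, hzero⟩
    refine ⟨hp2 ▸ hzero, fun k hk1 hk3 => ?_⟩
    interval_cases k
    · rintro rfl
      exact hsq (by funext i; fin_cases i <;> simp [Bmul])
    · exact hsq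

lemma sq_two_mul_sub_one_eq_of_solvableOfIndex_three (hl : l ≠ 0) {p : Fin 4 → ℝ}
    (hp : SolvableOfIndex l β p 3) : (2 * β - 1) ^ 2 = (1 - l) * (1 - 3 * l) := by
  obtain ⟨hp0, hsq, hzero⟩ := solvableOfIndex_three_iff.1 hp
  have hq0 : Bmul l β p p 0 = 0 := by simp [Bmul, hp0]
  obtain ⟨hq1, hq2⟩ := (Bmul_self_eq_zero_iff hq0).1 hzero
  have hq3 : Bmul l β p p 3 ≠ 0 := fun hq3 => hsq (by funext i; fin_cases i <;> assumption)
  rw [Bmul_self_of_apply_zero hl hp0] at hq1 hq2 hq3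
  simp only [Matrix.cons_val_one, Matrix.cons_val_two, Matrix.cons_val_three, Matrix.cons_val_zero,
    Matrix.tail_cons, Matrix.head_cons, div_eq_zero_iff, hl, or_false, mul_eq_zero] at hq1 hq2 hq3
  obtain ⟨hp1, hp2⟩ : p 1 ≠ 0 ∧ p 2 ≠ 0 := by simpa using hq3
  have e1 : l * p 1 + 2 * (l - β) * p 2 = 0 := hq1.resolve_left hp1
  have e2 : l * p 2 + 2 * (l + β - 1) * p 1 = 0 := hq2.resolve_left hp2
  have hdet : ((2 * β - 1) ^ 2 - (1 - l) * (1 - 3 * l)) * (p 1 * p 2) = 0 := by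
    linear_combination (l * p 2) * e1 - (2 * (l - β) * p 2) * e2
  exact sub_eq_zero.1 ((mul_eq_zero.1 hdet).resolve_right (mul_ne_zero hp1 hp2))

lemma solvableOfIndex_three_of_sq_two_mul_sub_one_eq (hl : l ≠ 0)
    (h : (2 * β - 1) ^ 2 = (1 - l) * (1 - 3 * l)) :
    SolvableOfIndex l β ![0, 2 * (β - l), l, 0] 3 := by
  have hβl : β - l ≠ 0 := by
    intro hβl
    obtain rfl : β = l := sub_eq_zero.1 hβl
    exact hl (pow_eq_zero_iff two_ne_zero |>.1 (by linear_combination h))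
  have hsq : Bmul l β ![0, 2 * (β - l), l, 0] ![0, 2 * (β - l), l, 0] =
      ![0, 0, 0, 4 * l * (β - l)] := by
    rw [Bmul_self_of_apply_zero hl rfl]
    funext i
    fin_cases i <;>
      simp only [Fin.zero_eta, Fin.mk_one, Fin.reduceFinMk, Matrix.cons_val_zero,
        Matrix.cons_val_one, Matrix.cons_val_two, Matrix.cons_val_three, Matrix.head_cons,
        Matrix.tail_cons, div_eq_zero_iff]
    · exact Or.inl (by ring)
    · exact Or.inl (by linear_combination l * h)
    · ring
  refine solvableOfIndex_three_iff.2 ⟨rfl, ?_, ?_⟩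
  · rw [hsq]
    intro h0
    simpa [hl, hβl] using congrFun h0 3
  · rw [hsq, Bmul_self_eq_zero_iff rfl]
    simp

lemma memP_iff (hl0 : 0 < l) (hl1 : l < 1) :
    memP l β ↔ (2 * β - 1) ^ 2 = (1 - l) * (1 - 3 * l) := by
  have hs (hl3 : l ≤ 1 / 3) : √((1 - l) * (1 - 3 * l)) ^ 2 = (1 - l) * (1 - 3 * l) :=
    Real.sq_sqrt (mul_nonneg (by linarith) (by linarith))
  constructor
  · rintro ⟨-, hl3, rfl | rfl⟩ <;> linear_combination hs hl3
  · intro h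
    have hl3 : l ≤ 1 / 3 := by nlinarith [sq_nonneg (2 * β - 1)]
    refine ⟨hl0, hl3, ?_⟩
    rcases sq_eq_sq_iff_eq_or_eq_neg.1 (h.trans (hs hl3).symm) with h' | h'
    · exact Or.inl (by linarith)
    · exact Or.inr (by linarith)

theorem stmt_3_general (l β : ℝ) (hl0 : 0 < l) (hl1 : l < 1) :
    (∃ (m : Fin 4 → ℝ) (n : ℕ), 3 ≤ n ∧ SolvableOfIndex l β m n) ↔ memP l β := by
  rw [memP_iff hl0 hl1]
  constructor
  · rintro ⟨m, n, hn, hm⟩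
    obtain ⟨j, rfl⟩ := Nat.exists_eq_add_of_le' hn
    exact sq_two_mul_sub_one_eq_of_solvableOfIndex_three hl0.ne' (hm.plen (by norm_num))
  · exact fun h => ⟨_, 3, le_rfl, solvableOfIndex_three_of_sq_two_mul_sub_one_eq hl0.ne' h⟩

/-- `B'(l, β)` admits a solvable element of solvability index `n` for some `n ≥ 3`
if and only if `(l, β) ∈ P`. -/
theorem stmt_3 (l β : ℝ) (hl0 : 0 < l) (hl1 : l < 1) (hβ0 : 0 < β) (hβ1 : β < 1) :
    (∃ (m : Fin 4 → ℝ) (n : ℕ), 3 ≤ n ∧ SolvableOfIndex l β m n) ↔ memP l β :=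
  stmt_3_general l β hl0 hl1
end

section
/- Every proper ideal of the algebra B'(λ,β) is contained in the 3-dimensional subspace spanned by {a, b, ab}; in particular, span{a, b, ab} is the unique maximal ideal of B'(λ,β). -/
/-- A linear subspace `I` is an ideal of `B'(l, β)` if `x ∘ y ∈ I` whenever `y ∈ I`. -/
def IsIdeal (l β : ℝ) (I : Submodule ℝ (Fin 4 → ℝ)) : Prop :=
  ∀ x y : Fin 4 → ℝ, y ∈ I → Bmul l β x y ∈ I

lemma mem_span_abab (x : Fin 4 → ℝ) :
    x ∈ Submodule.span ℝ ({va, vb, vab} : Set (Fin 4 → ℝ)) ↔ x 0 = 0 := by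
  constructor
  · intro hx
    have h : Submodule.span ℝ ({va, vb, vab} : Set (Fin 4 → ℝ)) ≤
        LinearMap.ker (LinearMap.proj 0 : (Fin 4 → ℝ) →ₗ[ℝ] ℝ) := by
      rw [Submodule.span_le]
      rintro y hy
      simp only [Set.mem_insert_iff, Set.mem_singleton_iff] at hy
      rcases hy with rfl | rfl | rfl <;> simp [va, vb, vab]
    exact h hx
  · intro hx
    have hrep : x = x 1 • va + x 2 • vb + x 3 • vab := by
      funext i; fin_cases i <;> simp [va, vb, vab, hx]
    rw [hrep]
    refine add_mem (add_mem ?_ ?_) ?_ <;>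
      exact Submodule.smul_mem _ _ (Submodule.subset_span (by simp))

/-- Every proper ideal of `B'(l, β)` is contained in `span {a, b, ab}`; in particular,
`span {a, b, ab}` is the unique maximal (proper) ideal of `B'(l, β)`. -/
theorem stmt_5 (l β : ℝ) (hl0 : 0 < l) (hl1 : l < 1) (hβ0 : 0 < β) (hβ1 : β < 1) :
    (∀ I : Submodule ℝ (Fin 4 → ℝ), IsIdeal l β I → I ≠ ⊤ →
        I ≤ Submodule.span ℝ ({va, vb, vab} : Set (Fin 4 → ℝ))) ∧
    IsIdeal l β (Submodule.span ℝ ({va, vb, vab} : Set (Fin 4 → ℝ))) ∧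
    Submodule.span ℝ ({va, vb, vab} : Set (Fin 4 → ℝ)) ≠ ⊤ := by
  have hlne : l ≠ 0 := ne_of_gt hl0
  refine ⟨?_, ?_, ?_⟩
  · intro I hI hItop
    intro y hy
    rw [mem_span_abab]
    by_contra hy0
    apply hItop
    -- From y with y 0 ≠ 0, generate everything.
    have hz : Bmul l β vo y ∈ I := hI vo y hy
    have hw : Bmul l β vo (Bmul l β vo y) ∈ I := hI vo _ hz
    have hu : (l * (1 - l))⁻¹ • (Bmul l β vo y - Bmul l β vo (Bmul l β vo y)) ∈ I :=
      Submodule.smul_mem _ _ (sub_mem hz hw)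
    have hueq : (l * (1 - l))⁻¹ • (Bmul l β vo y - Bmul l β vo (Bmul l β vo y))
        = ![0, y 1, y 2, 0] := by
      have h1 : (1 : ℝ) - l ≠ 0 := by linarith
      funext i; fin_cases i <;>
        simp [Bmul, vo] <;> field_simp <;> ring
    rw [hueq] at hu
    have hvo : vo ∈ I := by
      have h2 : (y 0)⁻¹ • (Bmul l β vo y - l • (![0, y 1, y 2, 0] : Fin 4 → ℝ)) ∈ I :=
        Submodule.smul_mem _ _ (sub_mem hz (Submodule.smul_mem _ _ hu))
      have heq : (y 0)⁻¹ • (Bmul l β vo y - l • (![0, y 1, y 2, 0] : Fin 4 → ℝ)) = vo := by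
        funext i; fin_cases i <;> simp [Bmul, vo] <;> field_simp
      rwa [heq] at h2
    have hva : va ∈ I := by
      have h2 : l⁻¹ • Bmul l β va vo ∈ I := Submodule.smul_mem _ _ (hI va vo hvo)
      have heq : l⁻¹ • Bmul l β va vo = va := by
        funext i; fin_cases i <;> simp [Bmul, vo, va] <;> field_simp
      rwa [heq] at h2
    have hvb : vb ∈ I := by
      have h2 : l⁻¹ • Bmul l β vb vo ∈ I := Submodule.smul_mem _ _ (hI vb vo hvo)
      have heq : l⁻¹ • Bmul l β vb vo = vb := by
        funext i; fin_cases i <;> simp [Bmul, vo, vb] <;> field_simp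
      rwa [heq] at h2
    have hvab : vab ∈ I := by
      have h2 : Bmul l β va vb - ((l - β) / l) • va - ((l + β - 1) / l) • vb ∈ I :=
        sub_mem (sub_mem (hI va vb hvb) (Submodule.smul_mem _ _ hva))
          (Submodule.smul_mem _ _ hvb)
      have heq : Bmul l β va vb - ((l - β) / l) • va - ((l + β - 1) / l) • vb = vab := by
        funext i; fin_cases i <;> simp [Bmul, va, vb, vab]
      rwa [heq] at h2
    rw [Submodule.eq_top_iff']
    intro v
    have hrep : v = v 0 • vo + v 1 • va + v 2 • vb + v 3 • vab := by
      funext i; fin_cases i <;> simp [vo, va, vb, vab]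
    rw [hrep]
    exact add_mem (add_mem (add_mem (Submodule.smul_mem _ _ hvo)
      (Submodule.smul_mem _ _ hva)) (Submodule.smul_mem _ _ hvb))
      (Submodule.smul_mem _ _ hvab)
  · intro x y hy
    rw [mem_span_abab] at hy ⊢
    simp [Bmul, hy]
  · intro h
    have : vo ∈ Submodule.span ℝ ({va, vb, vab} : Set (Fin 4 → ℝ)) := h ▸ Submodule.mem_top
    rw [mem_span_abab] at this
    simp [vo] at this
end

section
/- If β ≠ λ and β ≠ 1−λ, then the algebra B'(λ,β) has no 2-dimensional ideals. -/
lemma aux_rank3 (I : Submodule ℝ (Fin 4 → ℝ)) (u v w : Fin 4 → ℝ)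
    (hu : u ∈ I) (hv : v ∈ I) (hw : w ∈ I)
    (hli : LinearIndependent ℝ ![u, v, w]) : 3 ≤ Module.finrank ℝ I := by
  have hspan : Submodule.span ℝ (Set.range ![u, v, w]) ≤ I := by
    rw [Submodule.span_le]
    rintro x ⟨i, rfl⟩
    fin_cases i <;> simpa
  have h3 : Module.finrank ℝ (Submodule.span ℝ (Set.range ![u, v, w])) = 3 := by
    rw [finrank_span_eq_card hli]; simp
  exact h3 ▸ Submodule.finrank_mono hspan

lemma aux_li1 : LinearIndependent ℝ ![vo, va, vab] := by
  rw [Fintype.linearIndependent_iff]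
  intro g hg
  have h0 := congr_fun hg 0
  have h1 := congr_fun hg 1
  have h3 := congr_fun hg 3
  simp [Fin.sum_univ_three, vo, va, vab, Matrix.vecHead, Matrix.vecTail] at h0 h1 h3
  intro i; fin_cases i <;> simp [h0, h1, h3]

lemma aux_li2 (a b c d : ℝ) (hdet : a * d - b * c ≠ 0) :
    LinearIndependent ℝ ![![(0:ℝ), a, b, 0], ![0, c, d, 0], vab] := by
  rw [Fintype.linearIndependent_iff]
  intro g hg
  have h1 := congr_fun hg 1
  have h2 := congr_fun hg 2
  have h3 := congr_fun hg 3
  simp [Fin.sum_univ_three, vab] at h1 h2 h3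
  have hg0 : g 0 = 0 := by
    have : g 0 * (a * d - b * c) = 0 := by linear_combination d * h1 - c * h2
    rcases mul_eq_zero.mp this with h | h
    · exact h
    · exact absurd h hdet
  have hg1 : g 1 = 0 := by
    have : g 1 * (a * d - b * c) = 0 := by linear_combination a * h2 - b * h1
    rcases mul_eq_zero.mp this with h | h
    · exact h
    · exact absurd h hdet
  intro i; fin_cases i <;> simp [hg0, hg1, h3]

lemma aux_proj (l β : ℝ) (hl : l ≠ 0) (hl1 : l ≠ 1) (I : Submodule ℝ (Fin 4 → ℝ))
    (hI : IsIdeal l β I) (y : Fin 4 → ℝ) (hy : y ∈ I) :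
    ![y 0, 0, 0, 0] ∈ I ∧ ![0, y 1, y 2, 0] ∈ I ∧ ![0, 0, 0, y 3] ∈ I := by
  have hd : Bmul l β vo y ∈ I := hI vo y hy
  have hdd : Bmul l β vo (Bmul l β vo y) ∈ I := hI vo _ hd
  have hne : (1 : ℝ) - l ≠ 0 := by intro h; apply hl1; linarith
  have m1 : ![y 0, (0:ℝ), 0, 0] ∈ I := by
    have e1 : ![y 0, (0:ℝ), 0, 0]
        = (1 - l)⁻¹ • (Bmul l β vo (Bmul l β vo y) - l • Bmul l β vo y) := by
      funext i; fin_cases i <;> simp [Bmul, vo] <;> field_simp <;> ring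
    rw [e1]
    exact I.smul_mem _ (I.sub_mem hdd (I.smul_mem _ hd))
  have m2 : ![(0:ℝ), y 1, y 2, 0] ∈ I := by
    have e2 : ![(0:ℝ), y 1, y 2, 0]
        = (l * (1 - l))⁻¹ • (Bmul l β vo y - Bmul l β vo (Bmul l β vo y)) := by
      funext i; fin_cases i <;> simp [Bmul, vo] <;> field_simp <;> ring
    rw [e2]
    exact I.smul_mem _ (I.sub_mem hd hdd)
  refine ⟨m1, m2, ?_⟩
  have e3 : ![(0:ℝ), 0, 0, y 3] = y - ![y 0, 0, 0, 0] - ![0, y 1, y 2, 0] := by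
    funext i; fin_cases i <;>
      simp [Matrix.vecHead, Matrix.vecTail, show (Fin.succ 2 : Fin 4) = 3 from rfl]
  rw [e3]
  exact I.sub_mem (I.sub_mem hy m1) m2


/-- If `β ≠ l` and `β ≠ 1 - l`, the algebra `B'(l, β)` has no 2-dimensional ideals. -/
theorem stmt_6 (l β : ℝ) (hl0 : 0 < l) (hl1 : l < 1) (hβ0 : 0 < β) (hβ1 : β < 1)
    (h1 : β ≠ l) (h2 : β ≠ 1 - l) :
    ¬ ∃ I : Submodule ℝ (Fin 4 → ℝ), IsIdeal l β I ∧ Module.finrank ℝ I = 2 := by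
  rintro ⟨I, hI, hrank⟩
  have hl : l ≠ 0 := ne_of_gt hl0
  have hl1' : l ≠ 1 := ne_of_lt hl1
  have proj := fun y hy => aux_proj l β hl hl1' I hI y hy
  -- if an element of I has nonzero a- or b-component then vab ∈ I
  have habI : ∀ y : Fin 4 → ℝ, y ∈ I → ¬(y 1 = 0 ∧ y 2 = 0) → vab ∈ I := by
    intro y hy hne
    have hlam : ![(0:ℝ), y 1, y 2, 0] ∈ I := (proj y hy).2.1
    have hb := hI vb _ hlam
    have ha := hI va _ hlam
    have h3b : ![(0:ℝ), 0, 0, (Bmul l β vb ![(0:ℝ), y 1, y 2, 0]) 3] ∈ I := (proj _ hb).2.2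
    have h3a : ![(0:ℝ), 0, 0, (Bmul l β va ![(0:ℝ), y 1, y 2, 0]) 3] ∈ I := (proj _ ha).2.2
    have eb : (Bmul l β vb ![(0:ℝ), y 1, y 2, 0]) 3 = y 1 := by simp [Bmul, vb]
    have ea : (Bmul l β va ![(0:ℝ), y 1, y 2, 0]) 3 = y 2 := by simp [Bmul, va]
    rw [eb] at h3b; rw [ea] at h3a
    rcases not_and_or.mp hne with h | h
    · have e : vab = (y 1)⁻¹ • ![(0:ℝ), 0, 0, y 1] := by
        funext i; fin_cases i <;> simp [vab] <;> field_simp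
      rw [e]; exact I.smul_mem _ h3b
    · have e : vab = (y 2)⁻¹ • ![(0:ℝ), 0, 0, y 2] := by
        funext i; fin_cases i <;> simp [vab] <;> field_simp
      rw [e]; exact I.smul_mem _ h3a
  -- every element of I has zero o-component
  have h0 : ∀ y ∈ I, y 0 = 0 := by
    intro y hy
    by_contra hy0
    have hoI : vo ∈ I := by
      have e : vo = (y 0)⁻¹ • ![y 0, (0:ℝ), 0, 0] := by
        funext i; fin_cases i <;> simp [vo] <;> field_simp
      rw [e]; exact I.smul_mem _ (proj y hy).1
    have haI : va ∈ I := by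
      have e : va = l⁻¹ • Bmul l β va vo := by
        funext i; fin_cases i <;> simp [va, vo, Bmul] <;> field_simp
      rw [e]; exact I.smul_mem _ (hI va vo hoI)
    have hvabI : vab ∈ I := habI va haI (by simp [va])
    have h3 := aux_rank3 I vo va vab hoI haI hvabI aux_li1
    omega
  by_cases hall : ∃ y ∈ I, ¬(y 1 = 0 ∧ y 2 = 0)
  · obtain ⟨y, hy, hy12⟩ := hall
    have hv : ![(0:ℝ), y 1, y 2, 0] ∈ I := (proj y hy).2.1
    have hvabI : vab ∈ I := habI y hy hy12
    have hdet : ∀ z ∈ I, y 1 * z 2 - y 2 * z 1 = 0 := by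
      intro z hz
      by_contra hne
      have hzlam : ![(0:ℝ), z 1, z 2, 0] ∈ I := (proj z hz).2.1
      have hli := aux_li2 (y 1) (y 2) (z 1) (z 2) hne
      have h3 := aux_rank3 I _ _ _ hv hzlam hvabI hli
      omega
    have ea := hdet _ (hI va _ hv)
    have eb := hdet _ (hI vb _ hv)
    simp [Bmul, va, vb] at ea eb
    -- ea, eb are the two determinant equations
    have ea' : y 2 * ((y 1) * (β - 1) - (l - β) * y 2) = 0 := by
      field_simp at ea; linear_combination ea
    have eb' : y 1 * (β * y 2 + (l + β - 1) * y 1) = 0 := by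
      field_simp at eb; linear_combination eb
    by_cases hγ : y 2 = 0
    · have hα : y 1 ≠ 0 := by tauto
      have : l + β - 1 = 0 := by
        rcases mul_eq_zero.mp eb' with h | h
        · exact absurd h hα
        · rw [hγ] at h
          have := mul_eq_zero.mp (by linarith [h] : (l + β - 1) * y 1 = 0)
          tauto
      exact h2 (by linarith)
    · have eA : y 1 * (β - 1) - (l - β) * y 2 = 0 := by
        rcases mul_eq_zero.mp ea' with h | h
        · exact absurd h hγ
        · exact h
      by_cases hα : y 1 = 0
      · rw [hα] at eA
        have : l - β = 0 := by
          rcases mul_eq_zero.mp (by linarith [eA] : (l - β) * y 2 = 0) with h | h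
          · exact h
          · exact absurd h hγ
        exact h1 (by linarith)
      · have eB : β * y 2 + (l + β - 1) * y 1 = 0 := by
          rcases mul_eq_zero.mp eb' with h | h
          · exact absurd h hα
          · exact h
        have key : y 1 * (l ^ 2 - l) = 0 := by
          linear_combination β * eA + (l - β) * eB
        rcases mul_eq_zero.mp key with h | h
        · exact hα h
        · nlinarith
  · push_neg at hall
    have hle : I ≤ Submodule.span ℝ {vab} := by
      intro z hz
      rw [Submodule.mem_span_singleton]
      refine ⟨z 3, ?_⟩
      funext i
      fin_cases i <;>
        simp [vab, Matrix.vecHead, Matrix.vecTail, h0 z hz, (hall z hz).1, (hall z hz).2]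
    have hmono := Submodule.finrank_mono hle
    rw [hrank, finrank_span_singleton
      (by intro h; simpa [vab] using congr_fun h 3 : vab ≠ 0)] at hmono
    omega
end

section
/- If β = λ and λ ≠ 1/2, then span{b, ab} is an ideal of B'(λ,λ), and it is the only 2-dimensional ideal of B'(λ,λ). -/
/-- If `β = l` and `l ≠ 1/2`, then `span {b, ab}` is an ideal of `B'(l, l)` and it is
the only 2-dimensional ideal. -/
theorem stmt_7 (l β : ℝ) (hl0 : 0 < l) (hl1 : l < 1) (hβ0 : 0 < β) (hβ1 : β < 1)
    (hβ : β = l) (hl : l ≠ 1 / 2) :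
    ∀ I : Submodule ℝ (Fin 4 → ℝ),
      (IsIdeal l β I ∧ Module.finrank ℝ I = 2) ↔
        I = Submodule.span ℝ ({vb, vab} : Set (Fin 4 → ℝ)) := by
  rw [hβ]
  have hlne : l ≠ 0 := ne_of_gt hl0
  have h1l : (1 : ℝ) - l ≠ 0 := by intro h; linarith
  set c : ℝ := (l + l - 1) / l with hc
  have hc0 : c ≠ 0 := by
    rw [hc, div_ne_zero_iff]
    exact ⟨by intro h; apply hl; linarith, hlne⟩
  have hc1 : c ≠ 1 := by
    rw [hc]
    intro h
    rw [div_eq_one_iff_eq hlne] at h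
    exact (by linarith : l ≠ 1) (by linarith)
  -- linear independence of the relevant triples/pairs
  have li_pair : LinearIndependent ℝ ![vb, vab] := by
    rw [Fintype.linearIndependent_iff]
    intro g hg
    have h2 := congrFun hg 2
    have h3 := congrFun hg 3
    simp [Fin.sum_univ_two, vb, vab, Matrix.vecHead, Matrix.vecTail] at h2 h3
    intro i; fin_cases i <;> simp_all
  have hspan2 : Module.finrank ℝ (Submodule.span ℝ ({vb, vab} : Set (Fin 4 → ℝ))) = 2 := by
    have hr : ({vb, vab} : Set (Fin 4 → ℝ)) = Set.range ![vb, vab] := by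
      ext x
      simp [Fin.exists_fin_two]
      tauto
    rw [hr, finrank_span_eq_card li_pair]
    simp
  have li_ovab : LinearIndependent ℝ ![vo, va, vb] := by
    rw [Fintype.linearIndependent_iff]
    intro g hg
    have h0 := congrFun hg 0
    have h1 := congrFun hg 1
    have h2 := congrFun hg 2
    simp [Fin.sum_univ_three, vo, va, vb, Matrix.vecHead, Matrix.vecTail] at h0 h1 h2
    intro i; fin_cases i <;> simp_all
  have li_abab : LinearIndependent ℝ ![va, vb, vab] := by
    rw [Fintype.linearIndependent_iff]
    intro g hg
    have h1 := congrFun hg 1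
    have h2 := congrFun hg 2
    have h3 := congrFun hg 3
    simp [Fin.sum_univ_three, va, vb, vab, Matrix.vecHead, Matrix.vecTail] at h1 h2 h3
    intro i; fin_cases i <;> simp_all
  -- linearity of Bmul in the second argument
  have hBadd : ∀ x y z : Fin 4 → ℝ, Bmul l l x (y + z) = Bmul l l x y + Bmul l l x z := by
    intro x y z
    funext i
    fin_cases i <;> simp [Bmul] <;> ring
  have hBsmul : ∀ (r : ℝ) (x y : Fin 4 → ℝ), Bmul l l x (r • y) = r • Bmul l l x y := by
    intro r x y
    funext i
    fin_cases i <;> simp [Bmul] <;> ring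
  have hBzero : ∀ x : Fin 4 → ℝ, Bmul l l x 0 = 0 := by
    intro x
    funext i
    fin_cases i <;> simp [Bmul]
  intro I
  have hsmul_mem : ∀ (t : ℝ) (v : Fin 4 → ℝ), t ≠ 0 → t • v ∈ I → v ∈ I := by
    intro t v ht hm
    have := I.smul_mem t⁻¹ hm
    rwa [smul_smul, inv_mul_cancel₀ ht, one_smul] at this
  constructor
  · rintro ⟨hId, hfr⟩
    -- three linearly independent vectors in I gives a contradiction
    have h3 : ∀ u v w : Fin 4 → ℝ, LinearIndependent ℝ ![u, v, w] →
        u ∈ I → v ∈ I → w ∈ I → False := by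
      intro u v w hli hu hv hw
      have hle : Submodule.span ℝ (Set.range ![u, v, w]) ≤ I := by
        rw [Submodule.span_le]
        rintro x ⟨i, rfl⟩
        fin_cases i <;> assumption
      have h1 : Module.finrank ℝ (Submodule.span ℝ (Set.range ![u, v, w])) = 3 := by
        rw [finrank_span_eq_card hli]; simp
      have h2 := Submodule.finrank_mono hle
      rw [h1, hfr] at h2
      omega
    -- projection onto the middle coordinates
    have hp : ∀ y ∈ I, (![0, y 1, y 2, 0] : Fin 4 → ℝ) ∈ I := by
      intro y hy
      have h1 : Bmul l l vo y ∈ I := hId vo y hy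
      have h2 : Bmul l l vo (Bmul l l vo y) ∈ I := hId vo _ h1
      apply hsmul_mem (l * (1 - l)) _ (mul_ne_zero hlne h1l)
      have he : (l * (1 - l)) • (![0, y 1, y 2, 0] : Fin 4 → ℝ) =
          Bmul l l vo y - Bmul l l vo (Bmul l l vo y) := by
        funext i
        fin_cases i <;> simp [Bmul, vo] <;> ring
      rw [he]
      exact I.sub_mem h1 h2
    -- step 1: every element of I has vanishing `o` coordinate
    have h0 : ∀ y ∈ I, y 0 = 0 := by
      intro y hy
      by_contra hne
      have h1 : Bmul l l vo y ∈ I := hId vo y hy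
      have h2 : Bmul l l vo (Bmul l l vo y) ∈ I := hId vo _ h1
      have hvo : vo ∈ I := by
        apply hsmul_mem ((1 - l) * y 0) _ (mul_ne_zero h1l hne)
        have he : ((1 - l) * y 0) • vo =
            Bmul l l vo (Bmul l l vo y) - l • Bmul l l vo y := by
          funext i
          fin_cases i <;> simp [Bmul, vo] <;> ring
        rw [he]
        exact I.sub_mem h2 (I.smul_mem l h1)
      have hva' : va ∈ I := by
        apply hsmul_mem l _ hlne
        have he : l • va = Bmul l l va vo := by
          funext i
          fin_cases i <;> simp [Bmul, vo, va]
        rw [he]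
        exact hId va vo hvo
      have hvb' : vb ∈ I := by
        apply hsmul_mem l _ hlne
        have he : l • vb = Bmul l l vb vo := by
          funext i
          fin_cases i <;> simp [Bmul, vo, vb]
        rw [he]
        exact hId vb vo hvo
      exact h3 vo va vb li_ovab hvo hva' hvb'
    -- `va ∈ I` is impossible
    have hva : va ∉ I := by
      intro hva
      have h1 : Bmul l l vb va ∈ I := hId vb va hva
      have he1 : Bmul l l vb va = ![0, 0, c, 1] := by
        funext i
        fin_cases i <;> simp [Bmul, va, vb, hc]
      have hvb' : vb ∈ I := by
        apply hsmul_mem c _ hc0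
        have he : c • vb = (![0, (0:ℝ), c, 0] : Fin 4 → ℝ) := by
          funext i
          fin_cases i <;> simp [vb]
        rw [he]
        have := hp _ h1
        rw [he1] at this
        simpa using this
      have hvab' : vab ∈ I := by
        have hm : Bmul l l vb va - c • vb ∈ I := I.sub_mem h1 (I.smul_mem c hvb')
        have he : vab = Bmul l l vb va - c • vb := by
          rw [he1]
          funext i
          fin_cases i <;> simp [vab, vb]
        rw [he]
        exact hm
      exact h3 va vb vab li_abab hva hvb' hvab'
    -- step 2: every element of I has vanishing `a` coordinate
    have h1z : ∀ y ∈ I, y 1 = 0 := by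
      intro y hy
      by_contra hne
      apply hva
      have hcm1 : c - 1 ≠ 0 := sub_ne_zero.mpr hc1
      have hpy : (![0, y 1, y 2, 0] : Fin 4 → ℝ) ∈ I := hp y hy
      have hA : Bmul l l va ![0, y 1, y 2, 0] ∈ I := hId va _ hpy
      have heA : Bmul l l va ![0, y 1, y 2, 0] = ![0, y 1, c * y 2, y 2] := by
        funext i
        fin_cases i <;> simp [Bmul, va, hc] <;> ring
      have hpA : (![0, y 1, c * y 2, 0] : Fin 4 → ℝ) ∈ I := by
        have := hp _ hA
        rw [heA] at this
        simpa using this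
      apply hsmul_mem ((c - 1) * y 1) _ (mul_ne_zero hcm1 hne)
      have he : ((c - 1) * y 1) • va =
          (c - 1) • (![0, y 1, y 2, 0] : Fin 4 → ℝ) -
            ((![0, y 1, c * y 2, 0] : Fin 4 → ℝ) - ![0, y 1, y 2, 0]) := by
        funext i
        fin_cases i <;> simp [va] <;> ring
      rw [he]
      exact I.sub_mem (I.smul_mem _ hpy) (I.sub_mem hpA hpy)
    -- conclude `I ≤ span {vb, vab}` and equality by dimension
    have hle : I ≤ Submodule.span ℝ ({vb, vab} : Set (Fin 4 → ℝ)) := by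
      intro y hy
      have he : y = y 2 • vb + y 3 • vab := by
        funext i
        fin_cases i <;> simp [vb, vab, h0 y hy, h1z y hy]
      rw [he]
      exact Submodule.add_mem _
        (Submodule.smul_mem _ _ (Submodule.subset_span (by simp)))
        (Submodule.smul_mem _ _ (Submodule.subset_span (by simp)))
    exact Submodule.eq_of_le_of_finrank_le hle (by rw [hspan2, hfr])
  · rintro rfl
    refine ⟨?_, hspan2⟩
    intro x y hy
    induction hy using Submodule.span_induction with
    | mem z hz =>
      rcases hz with hz | hz
      · subst hz
        have he : Bmul l l x vb = (l * x 0 + x 2 + c * x 1) • vb + x 1 • vab := by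
          funext i
          fin_cases i <;> simp [Bmul, vb, vab, hc] <;> ring
        rw [he]
        exact Submodule.add_mem _
          (Submodule.smul_mem _ _ (Submodule.subset_span (by simp)))
          (Submodule.smul_mem _ _ (Submodule.subset_span (by simp)))
      · simp only [Set.mem_singleton_iff] at hz
        subst hz
        have he : Bmul l l x vab = 0 := by
          funext i
          fin_cases i <;> simp [Bmul, vab]
        rw [he]
        exact Submodule.zero_mem _
    | zero => rw [hBzero]; exact Submodule.zero_mem _
    | add u v _ _ hu hv => rw [hBadd]; exact Submodule.add_mem _ hu hv
    | smul r u _ hu => rw [hBsmul]; exact Submodule.smul_mem _ _ hu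
end

section
/- If β = 1−λ and λ ≠ 1/2, then span{a, ab} is an ideal of B'(λ,1−λ), and it is the only 2-dimensional ideal of B'(λ,1−λ). -/
noncomputable def pr02 : (Fin 4 → ℝ) →ₗ[ℝ] ℝ × ℝ :=
  (LinearMap.proj 0).prod (LinearMap.proj 2)

lemma mem_ker_pr02 (y : Fin 4 → ℝ) : y ∈ LinearMap.ker pr02 ↔ y 0 = 0 ∧ y 2 = 0 := by
  simp [pr02, LinearMap.mem_ker, LinearMap.prod_apply, Pi.prod, Prod.ext_iff]

lemma span_va_vab_eq :
    Submodule.span ℝ ({va, vab} : Set (Fin 4 → ℝ)) = LinearMap.ker pr02 := by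
  apply le_antisymm
  · rw [Submodule.span_le]
    rintro y (rfl | rfl) <;> rw [SetLike.mem_coe, mem_ker_pr02] <;>
      constructor <;> simp [va, vab]
  · intro y hy
    rw [mem_ker_pr02] at hy
    have e : y = y 1 • va + y 3 • vab := by
      funext i; fin_cases i <;> simp [va, vab, hy.1, hy.2]
    rw [e]
    exact add_mem (Submodule.smul_mem _ _ (Submodule.subset_span (by simp)))
      (Submodule.smul_mem _ _ (Submodule.subset_span (by simp)))

lemma finrank_span_va_vab :
    Module.finrank ℝ (Submodule.span ℝ ({va, vab} : Set (Fin 4 → ℝ))) = 2 := by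
  rw [span_va_vab_eq]
  have h := LinearMap.finrank_range_add_finrank_ker pr02
  have hrange : LinearMap.range pr02 = ⊤ := by
    rw [LinearMap.range_eq_top]
    rintro ⟨c, d⟩
    refine ⟨![c, 0, d, 0], ?_⟩
    simp [pr02, Pi.prod]
  rw [hrange] at h
  simp only [finrank_top] at h
  simp at h
  omega

lemma rank3_contra (I : Submodule ℝ (Fin 4 → ℝ)) (ha : va ∈ I) (hb : vb ∈ I)
    (hab : vab ∈ I) (hr : Module.finrank ℝ I = 2) : False := by
  set f : (Fin 4 → ℝ) →ₗ[ℝ] ℝ := LinearMap.proj 0 with hf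
  have hK : LinearMap.ker f ≤ I := by
    intro y hy
    have h0 : y 0 = 0 := hy
    have e : y = y 1 • va + y 2 • vb + y 3 • vab := by
      funext i; fin_cases i <;> simp [va, vb, vab, h0]
    rw [e]
    exact add_mem (add_mem (Submodule.smul_mem _ _ ha) (Submodule.smul_mem _ _ hb))
      (Submodule.smul_mem _ _ hab)
  have h3 : Module.finrank ℝ (LinearMap.ker f) = 3 := by
    have h := LinearMap.finrank_range_add_finrank_ker f
    have hrange : LinearMap.range f = ⊤ := by
      rw [LinearMap.range_eq_top]
      exact fun c => ⟨fun _ => c, rfl⟩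
    rw [hrange] at h
    simp only [finrank_top] at h
    simp at h
    omega
  have hle := Submodule.finrank_mono hK
  omega

/-- If `β = 1 - l` and `l ≠ 1/2`, then `span {a, ab}` is an ideal of `B'(l, 1-l)` and it is
the only 2-dimensional ideal. -/
theorem stmt_8 (l β : ℝ) (hl0 : 0 < l) (hl1 : l < 1) (hβ0 : 0 < β) (hβ1 : β < 1)
    (hβ : β = 1 - l) (hl : l ≠ 1 / 2) :
    ∀ I : Submodule ℝ (Fin 4 → ℝ),
      (IsIdeal l β I ∧ Module.finrank ℝ I = 2) ↔
        I = Submodule.span ℝ ({va, vab} : Set (Fin 4 → ℝ)) := by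
  subst hβ
  have hlne : l ≠ 0 := ne_of_gt hl0
  have h1l : (1:ℝ) - l ≠ 0 := by intro h; linarith
  have h2l : 2 * l - 1 ≠ 0 := by
    intro h; apply hl; linarith
  intro I
  constructor
  · rintro ⟨hI, hr⟩
    -- Step 1: every element of I has zero 0-coordinate.
    have key0 : ∀ y ∈ I, y 0 = 0 := by
      by_contra h
      push_neg at h
      obtain ⟨y, hy, hy0⟩ := h
      have h1 := hI vo y hy
      have h2 := hI vo _ h1
      have h3 : ((1 - l) * y 0)⁻¹ •
          (Bmul l (1-l) vo (Bmul l (1-l) vo y) - l • Bmul l (1-l) vo y) ∈ I :=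
        Submodule.smul_mem _ _ (Submodule.sub_mem _ h2 (Submodule.smul_mem _ _ h1))
      have hc : (1 - l) * y 0 ≠ 0 := mul_ne_zero h1l hy0
      have hvo : vo ∈ I := by
        have e : vo = ((1 - l) * y 0)⁻¹ •
            (Bmul l (1-l) vo (Bmul l (1-l) vo y) - l • Bmul l (1-l) vo y) := by
          funext i
          fin_cases i <;> simp [Bmul, vo] <;> field_simp <;> ring
        rw [e]; exact h3
      have hva : va ∈ I := by
        have h := hI va vo hvo
        have e : va = l⁻¹ • Bmul l (1-l) va vo := by
          funext i
          fin_cases i <;> simp [Bmul, va, vo] <;> field_simp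
        rw [e]; exact Submodule.smul_mem _ _ h
      have hvb : vb ∈ I := by
        have h := hI vb vo hvo
        have e : vb = l⁻¹ • Bmul l (1-l) vb vo := by
          funext i
          fin_cases i <;> simp [Bmul, vb, vo] <;> field_simp
        rw [e]; exact Submodule.smul_mem _ _ h
      have hvab : vab ∈ I := by
        have h := hI va vb hvb
        have e : vab = Bmul l (1-l) va vb - ((2*l - 1)/l) • va := by
          funext i
          fin_cases i <;> simp [Bmul, va, vb, vab] <;> field_simp <;> ring
        rw [e]; exact Submodule.sub_mem _ h (Submodule.smul_mem _ _ hva)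
      have htop : I = ⊤ := by
        rw [eq_top_iff]
        intro y _
        have e : y = y 0 • vo + y 1 • va + y 2 • vb + y 3 • vab := by
          funext i; fin_cases i <;> simp [vo, va, vb, vab]
        rw [e]
        exact add_mem (add_mem (add_mem (Submodule.smul_mem _ _ hvo)
          (Submodule.smul_mem _ _ hva)) (Submodule.smul_mem _ _ hvb))
          (Submodule.smul_mem _ _ hvab)
      rw [htop, finrank_top] at hr
      simp at hr
    -- Step 2: every element of I has zero 2-coordinate.
    have key2 : ∀ y ∈ I, y 2 = 0 := by
      by_contra h
      push_neg at h
      obtain ⟨y, hy, hy2⟩ := h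
      have hy0 : y 0 = 0 := key0 y hy
      -- u = (0, y1, y2, 0) ∈ I
      have hu : (![0, y 1, y 2, 0] : Fin 4 → ℝ) ∈ I := by
        have h1 := Submodule.smul_mem _ l⁻¹ (hI vo y hy)
        have e : (![0, y 1, y 2, 0] : Fin 4 → ℝ) = l⁻¹ • Bmul l (1-l) vo y := by
          funext i
          fin_cases i <;> simp [Bmul, vo, hy0] <;> field_simp
        rw [e]; exact h1
      set u : Fin 4 → ℝ := ![0, y 1, y 2, 0] with hudef
      -- La u = (0, y1 + k*y2, 0, y2) ∈ I  where k = (2l-1)/l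
      have hLa := hI va u hu
      -- p = (0, y1 + k*y2, 0, 0) ∈ I
      have hp : (![0, y 1 + (2*l-1)/l * y 2, 0, 0] : Fin 4 → ℝ) ∈ I := by
        have h1 := Submodule.smul_mem _ l⁻¹ (hI vo _ hLa)
        have e : (![0, y 1 + (2*l-1)/l * y 2, 0, 0] : Fin 4 → ℝ)
            = l⁻¹ • Bmul l (1-l) vo (Bmul l (1-l) va u) := by
          funext i
          fin_cases i <;> simp [Bmul, vo, va, hudef] <;> field_simp <;> (first | tauto | ring1 | (ring_nf; tauto))
        rw [e]; exact h1
      -- vab ∈ I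
      have hvab : vab ∈ I := by
        have e : Bmul l (1-l) va u - ![0, y 1 + (2*l-1)/l * y 2, 0, 0] = y 2 • vab := by
          funext i
          fin_cases i <;> simp [Bmul, va, vab, hudef] <;> ring
        have h1 := Submodule.sub_mem _ hLa hp
        rw [e] at h1
        have h2 := Submodule.smul_mem _ (y 2)⁻¹ h1
        rwa [smul_smul, inv_mul_cancel₀ hy2, one_smul] at h2
      by_cases hcz : y 1 + (2*l-1)/l * y 2 = 0
      · -- second case: use Bmul vb u
        have hw := hI vb u hu   -- (0, k*y1, y2, y1)
        have hw' : (![0, (2*l-1)/l * y 1, y 2, 0] : Fin 4 → ℝ) ∈ I := by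
          have h1 := Submodule.sub_mem _ hw (Submodule.smul_mem _ (y 1) hvab)
          have e : (![0, (2*l-1)/l * y 1, y 2, 0] : Fin 4 → ℝ)
              = Bmul l (1-l) vb u - y 1 • vab := by
            funext i
            fin_cases i <;> simp [Bmul, vb, vab, hudef] <;> (first | tauto | ring1 | (ring_nf; tauto))
          rw [e]; exact h1
        have hd : (![0, y 1 - (2*l-1)/l * y 1, 0, 0] : Fin 4 → ℝ) ∈ I := by
          have h1 := Submodule.sub_mem _ hu hw'
          have e : (![0, y 1 - (2*l-1)/l * y 1, 0, 0] : Fin 4 → ℝ)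
              = u - ![0, (2*l-1)/l * y 1, y 2, 0] := by
            funext i
            fin_cases i <;> simp [hudef] <;> ring
          rw [e]; exact h1
        by_cases hy1 : y 1 = 0
        · -- then k * y2 = 0 with y2 ≠ 0, so k = 0, contradiction
          rw [hy1] at hcz
          simp [hy2] at hcz
          rcases hcz with hcz | hcz
          · exact h2l hcz
          · exact hlne hcz
        · -- y1 ≠ 0: get va ∈ I, then vb ∈ I, contradiction
          have hco : y 1 - (2*l-1)/l * y 1 ≠ 0 := by
            have : y 1 - (2*l-1)/l * y 1 = (1-l)/l * y 1 := by field_simp; ring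
            rw [this]
            exact mul_ne_zero (div_ne_zero h1l hlne) hy1
          have hva : va ∈ I := by
            have e : (![0, y 1 - (2*l-1)/l * y 1, 0, 0] : Fin 4 → ℝ)
                = (y 1 - (2*l-1)/l * y 1) • va := by
              funext i
              fin_cases i <;> simp [va]
            rw [e] at hd
            have h2 := Submodule.smul_mem _ (y 1 - (2*l-1)/l * y 1)⁻¹ hd
            rwa [smul_smul, inv_mul_cancel₀ hco, one_smul] at h2
          have hvb : vb ∈ I := by
            have e : u - y 1 • va = y 2 • vb := by
              funext i
              fin_cases i <;> simp [va, vb, hudef]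
            have h1 := Submodule.sub_mem _ hu (Submodule.smul_mem _ (y 1) hva)
            rw [e] at h1
            have h2 := Submodule.smul_mem _ (y 2)⁻¹ h1
            rwa [smul_smul, inv_mul_cancel₀ hy2, one_smul] at h2
          exact rank3_contra I hva hvb hvab hr
      · -- c ≠ 0: va ∈ I directly
        have hva : va ∈ I := by
          have e : (![0, y 1 + (2*l-1)/l * y 2, 0, 0] : Fin 4 → ℝ)
              = (y 1 + (2*l-1)/l * y 2) • va := by
            funext i
            fin_cases i <;> simp [va]
          rw [e] at hp
          have h2 := Submodule.smul_mem _ (y 1 + (2*l-1)/l * y 2)⁻¹ hp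
          rwa [smul_smul, inv_mul_cancel₀ hcz, one_smul] at h2
        have hvb : vb ∈ I := by
          have e : u - y 1 • va = y 2 • vb := by
            funext i
            fin_cases i <;> simp [va, vb, hudef]
          have h1 := Submodule.sub_mem _ hu (Submodule.smul_mem _ (y 1) hva)
          rw [e] at h1
          have h2 := Submodule.smul_mem _ (y 2)⁻¹ h1
          rwa [smul_smul, inv_mul_cancel₀ hy2, one_smul] at h2
        exact rank3_contra I hva hvb hvab hr
    -- Conclude: I ≤ span {va, vab} and finranks agree
    have hle : I ≤ Submodule.span ℝ ({va, vab} : Set (Fin 4 → ℝ)) := by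
      intro y hy
      rw [span_va_vab_eq, mem_ker_pr02]
      exact ⟨key0 y hy, key2 y hy⟩
    exact Submodule.eq_of_le_of_finrank_eq hle (by rw [hr, finrank_span_va_vab])
  · rintro rfl
    refine ⟨?_, finrank_span_va_vab⟩
    intro x y hy
    rw [span_va_vab_eq, mem_ker_pr02] at hy ⊢
    constructor <;> simp [Bmul, hy.1, hy.2] <;> ring
end

section
/- For all admissible parameters λ, β, the span of the basis vector ab is the only 1-dimensional ideal of the algebra B'(λ,β). -/
/-- For all admissible parameters, `span {ab}` is the only 1-dimensional ideal of
`B'(l, β)`. -/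
theorem stmt_10 (l β : ℝ) (hl0 : 0 < l) (hl1 : l < 1) (hβ0 : 0 < β) (hβ1 : β < 1) :
    ∀ I : Submodule ℝ (Fin 4 → ℝ),
      (IsIdeal l β I ∧ Module.finrank ℝ I = 1) ↔
        I = Submodule.span ℝ ({vab} : Set (Fin 4 → ℝ)) := by
  have hl : l ≠ 0 := ne_of_gt hl0
  have hvab : (vab : Fin 4 → ℝ) ≠ 0 := by
    intro h; have := congrFun h 3; simp [vab] at this
  intro I
  constructor
  · rintro ⟨hid, hrank⟩
    obtain ⟨y, hyI, hy0⟩ : ∃ y ∈ I, y ≠ 0 := by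
      by_contra h
      push_neg at h
      have : I = ⊥ := by
        apply (Submodule.eq_bot_iff I).mpr
        intro x hx; exact h x hx
      rw [this] at hrank; simp at hrank
    have hspan : Submodule.span ℝ {y} = I := by
      apply Submodule.eq_of_le_of_finrank_eq
        (Submodule.span_le.mpr (by simp [hyI]))
      rw [finrank_span_singleton hy0, hrank]
    have key : ∀ x, ∃ t : ℝ, Bmul l β x y = t • y := by
      intro x
      have h := hid x y hyI
      rw [← hspan, Submodule.mem_span_singleton] at h
      obtain ⟨t, ht⟩ := h; exact ⟨t, ht.symm⟩
    obtain ⟨t, ht⟩ := key vo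
    obtain ⟨u, hu⟩ := key va
    obtain ⟨v, hv⟩ := key vb
    have ht0 := congrFun ht 0
    have ht1 := congrFun ht 1
    have ht2 := congrFun ht 2
    have ht3 := congrFun ht 3
    have hu1 := congrFun hu 1
    have hu3 := congrFun hu 3
    have hv3 := congrFun hv 3
    simp [Bmul, vo, va, vb, Matrix.cons_val_zero, Matrix.cons_val_one] at ht0 ht1 ht2 ht3 hu1 hu3 hv3
    by_cases hs : y 3 = 0
    · exfalso
      rw [hs, mul_zero] at hu3 hv3
      rw [hu3, hv3] at hu1
      have hp : y 0 = 0 := by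
        have : l * y 0 = 0 := by linarith [hu1]
        exact (mul_eq_zero.mp this).resolve_left hl
      apply hy0
      funext i
      fin_cases i <;> simp [hp, hu3, hv3, hs]
    · have htz : t = 0 := ht3.resolve_right hs
      rw [htz] at ht0 ht1 ht2
      simp at ht0 ht1 ht2
      have hq : y 1 = 0 := ht1.resolve_left hl
      have hr : y 2 = 0 := ht2.resolve_left hl
      have hy : y = y 3 • vab := by
        funext i
        fin_cases i <;> simp [ht0, hq, hr, vab]
      rw [← hspan, hy, Submodule.span_singleton_smul_eq (IsUnit.mk0 _ hs)]
  · rintro rfl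
    constructor
    · intro x y hy
      rw [Submodule.mem_span_singleton] at hy
      obtain ⟨c, rfl⟩ := hy
      have : Bmul l β x (c • vab) = 0 := by
        funext i
        fin_cases i <;> simp [Bmul, vab]
      rw [this]
      exact Submodule.zero_mem _
    · rw [finrank_span_singleton hvab]
end

section
/- If β ≠ λ and β ≠ 1−λ, then the ideals of B'(λ,β) are exactly the four subspaces: {0}, span{ab}, span{a, b, ab}, and B'(λ,β) itself. -/

def K3 : Submodule ℝ (Fin 4 → ℝ) where
  carrier := {v | v 0 = 0}
  add_mem' := by intro a b ha hb; simp_all [Set.mem_setOf_eq]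
  zero_mem' := rfl
  smul_mem' := by intro c v hv; simp_all [Set.mem_setOf_eq]

def K1 : Submodule ℝ (Fin 4 → ℝ) where
  carrier := {v | v 0 = 0 ∧ v 1 = 0 ∧ v 2 = 0}
  add_mem' := by intro a b ha hb; simp_all [Set.mem_setOf_eq]
  zero_mem' := by simp [Set.mem_setOf_eq]
  smul_mem' := by intro c v hv; simp_all [Set.mem_setOf_eq]

lemma mem_span3 (v : Fin 4 → ℝ) :
    v ∈ Submodule.span ℝ ({va, vb, vab} : Set (Fin 4 → ℝ)) ↔ v 0 = 0 := by
  constructor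
  · intro hv
    have h : Submodule.span ℝ ({va, vb, vab} : Set (Fin 4 → ℝ)) ≤ K3 := by
      rw [Submodule.span_le]
      rintro x (rfl | rfl | rfl) <;> simp [K3, va, vb, vab, Set.mem_setOf_eq]
    exact h hv
  · intro hv
    have h : v = v 1 • va + v 2 • vb + v 3 • vab := by
      ext i; fin_cases i <;> simp [va, vb, vab, hv]
    rw [h]
    refine add_mem (add_mem ?_ ?_) ?_ <;>
      exact Submodule.smul_mem _ _ (Submodule.subset_span (by simp))

lemma mem_span1 (v : Fin 4 → ℝ) :
    v ∈ Submodule.span ℝ ({vab} : Set (Fin 4 → ℝ)) ↔ v 0 = 0 ∧ v 1 = 0 ∧ v 2 = 0 := by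
  constructor
  · intro hv
    have h : Submodule.span ℝ ({vab} : Set (Fin 4 → ℝ)) ≤ K1 := by
      rw [Submodule.span_le]
      rintro x rfl
      simp [K1, vab, Set.mem_setOf_eq]
    exact h hv
  · rintro ⟨h0, h1', h2'⟩
    have h : v = v 3 • vab := by
      ext i; fin_cases i <;> simp [vab, h0, h1', h2']
    rw [h]
    exact Submodule.smul_mem _ _ (Submodule.subset_span (by simp))

lemma step (l β : ℝ) (hl : l ≠ 0) (I : Submodule ℝ (Fin 4 → ℝ)) (hI : IsIdeal l β I)
    (s t : ℝ) (hp : (![0, s, t, 0] : Fin 4 → ℝ) ∈ I) :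
    t • (![0, (l - β) / l, (l + β - 1) / l - 1, 0] : Fin 4 → ℝ) ∈ I ∧
    s • (![0, (l - β) / l - 1, (l + β - 1) / l, 0] : Fin 4 → ℝ) ∈ I := by
  constructor
  · have h1 : Bmul l β va ![0, s, t, 0] - ![0, s, t, 0] ∈ I :=
      I.sub_mem (hI va _ hp) hp
    have h2 : l⁻¹ • Bmul l β vo (Bmul l β va ![0, s, t, 0] - ![0, s, t, 0]) ∈ I :=
      I.smul_mem _ (hI vo _ h1)
    have he : l⁻¹ • Bmul l β vo (Bmul l β va ![0, s, t, 0] - ![0, s, t, 0]) =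
        t • (![0, (l - β) / l, (l + β - 1) / l - 1, 0] : Fin 4 → ℝ) := by
      ext i; fin_cases i <;>
        simp [Bmul, vo, va] <;> field_simp <;> ring
    rwa [he] at h2
  · have h1 : Bmul l β vb ![0, s, t, 0] - ![0, s, t, 0] ∈ I :=
      I.sub_mem (hI vb _ hp) hp
    have h2 : l⁻¹ • Bmul l β vo (Bmul l β vb ![0, s, t, 0] - ![0, s, t, 0]) ∈ I :=
      I.smul_mem _ (hI vo _ h1)
    have he : l⁻¹ • Bmul l β vo (Bmul l β vb ![0, s, t, 0] - ![0, s, t, 0]) =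
        s • (![0, (l - β) / l - 1, (l + β - 1) / l, 0] : Fin 4 → ℝ) := by
      ext i; fin_cases i <;>
        simp [Bmul, vo, vb] <;> field_simp <;> ring
    rwa [he] at h2


/-- If `β ≠ l` and `β ≠ 1 - l`, the ideals of `B'(l, β)` are exactly `{0}`, `span {ab}`,
`span {a, b, ab}` and the whole algebra. -/
theorem stmt_11 (l β : ℝ) (hl0 : 0 < l) (hl1 : l < 1) (hβ0 : 0 < β) (hβ1 : β < 1)
    (h1 : β ≠ l) (h2 : β ≠ 1 - l) :
    ∀ I : Submodule ℝ (Fin 4 → ℝ),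
      IsIdeal l β I ↔
        (I = ⊥ ∨ I = Submodule.span ℝ ({vab} : Set (Fin 4 → ℝ)) ∨
         I = Submodule.span ℝ ({va, vb, vab} : Set (Fin 4 → ℝ)) ∨ I = ⊤) := by
  have hl : l ≠ 0 := ne_of_gt hl0
  set c1 : ℝ := (l - β) / l with hc1def
  set c2 : ℝ := (l + β - 1) / l with hc2def
  have hc1 : c1 ≠ 0 := div_ne_zero (sub_ne_zero.mpr (Ne.symm h1)) hl
  have hc2 : c2 ≠ 0 := by
    apply div_ne_zero _ hl
    intro h; apply h2; linarith
  have hc1' : c1 - 1 ≠ 0 := by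
    rw [hc1def]; intro h
    have : (l - β) / l = 1 := by linarith
    rw [div_eq_one_iff_eq hl] at this
    exact hβ0.ne' (by linarith)
  have hc2' : c2 - 1 ≠ 0 := by
    rw [hc2def]; intro h
    have : (l + β - 1) / l = 1 := by linarith
    rw [div_eq_one_iff_eq hl] at this
    exact hβ1.ne (by linarith)
  have hd : c1 * c2 - (c1 - 1) * (c2 - 1) ≠ 0 := by
    rw [hc1def, hc2def]
    have : (l - β) / l * ((l + β - 1) / l) - ((l - β) / l - 1) * ((l + β - 1) / l - 1)
        = (l - 1) / l := by field_simp; ring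
    rw [this]
    exact div_ne_zero (sub_ne_zero.mpr (ne_of_lt hl1)) hl
  intro I
  constructor
  · intro hI
    by_cases hA : ∃ y ∈ I, y 0 ≠ 0
    · -- I = ⊤
      right; right; right
      obtain ⟨y, hy, hy0⟩ := hA
      have hz : Bmul l β vo (Bmul l β vo y) - l • Bmul l β vo y ∈ I :=
        I.sub_mem (hI vo _ (hI vo _ hy)) (I.smul_mem _ (hI vo _ hy))
      have heq : Bmul l β vo (Bmul l β vo y) - l • Bmul l β vo y = ((1 - l) * y 0) • vo := by
        ext i; fin_cases i <;> simp [Bmul, vo] <;> ring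
      have hne : (1 - l) * y 0 ≠ 0 := mul_ne_zero (sub_ne_zero.mpr (ne_of_gt (by linarith))) hy0
      have hvo : vo ∈ I := by
        have := I.smul_mem ((1 - l) * y 0)⁻¹ (heq ▸ hz)
        rwa [smul_smul, inv_mul_cancel₀ hne, one_smul] at this
      have hva : va ∈ I := by
        have h := I.smul_mem l⁻¹ (hI va vo hvo)
        have he : l⁻¹ • Bmul l β va vo = va := by
          ext i; fin_cases i <;> simp [Bmul, vo, va] <;> field_simp
        rwa [he] at h
      have hvb : vb ∈ I := by
        have h := I.smul_mem l⁻¹ (hI vb vo hvo)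
        have he : l⁻¹ • Bmul l β vb vo = vb := by
          ext i; fin_cases i <;> simp [Bmul, vo, vb] <;> field_simp
        rwa [he] at h
      have hvab : vab ∈ I := by
        have h := I.sub_mem (hI va vb hvb) (I.add_mem (I.smul_mem c1 hva) (I.smul_mem c2 hvb))
        have he : Bmul l β va vb - (c1 • va + c2 • vb) = vab := by
          ext i; fin_cases i <;> simp [Bmul, va, vb, vab, hc1def, hc2def]
        rwa [he] at h
      rw [eq_top_iff]
      intro v _
      have hv : v = v 0 • vo + v 1 • va + v 2 • vb + v 3 • vab := by
        ext i; fin_cases i <;> simp [vo, va, vb, vab]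
      rw [hv]
      exact I.add_mem (I.add_mem (I.add_mem (I.smul_mem _ hvo) (I.smul_mem _ hva))
        (I.smul_mem _ hvb)) (I.smul_mem _ hvab)
    · push_neg at hA
      by_cases hB : ∃ y ∈ I, y 1 ≠ 0 ∨ y 2 ≠ 0
      · -- I = span {va, vb, vab}
        right; right; left
        obtain ⟨y, hy, hy12⟩ := hB
        have hy0 := hA y hy
        have hp : (![0, y 1, y 2, 0] : Fin 4 → ℝ) ∈ I := by
          have h := I.smul_mem l⁻¹ (hI vo y hy)
          have he : l⁻¹ • Bmul l β vo y = ![0, y 1, y 2, 0] := by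
            ext i; fin_cases i <;> simp [Bmul, vo, hy0] <;> field_simp
          rwa [he] at h
        have hu : (![0, c1, c2 - 1, 0] : Fin 4 → ℝ) ∈ I ∧
            (![0, c1 - 1, c2, 0] : Fin 4 → ℝ) ∈ I := by
          have smul_cancel : ∀ (r : ℝ) (w : Fin 4 → ℝ), r ≠ 0 → r • w ∈ I → w ∈ I := by
            intro r w hr h
            have := I.smul_mem r⁻¹ h
            rwa [smul_smul, inv_mul_cancel₀ hr, one_smul] at this
          rcases hy12 with hs | ht
          · have hu2 := smul_cancel _ _ hs (step l β hl I hI _ _ hp).2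
            have hu1 := smul_cancel _ _ hc2 (step l β hl I hI _ _ hu2).1
            exact ⟨hu1, hu2⟩
          · have hu1 := smul_cancel _ _ ht (step l β hl I hI _ _ hp).1
            have hu2 := smul_cancel _ _ hc1 (step l β hl I hI _ _ hu1).2
            exact ⟨hu1, hu2⟩
        obtain ⟨hu1, hu2⟩ := hu
        set d : ℝ := c1 * c2 - (c1 - 1) * (c2 - 1) with hddef
        have hva : va ∈ I := by
          have h := I.sub_mem (I.smul_mem c2 hu1) (I.smul_mem (c2 - 1) hu2)
          have he : c2 • (![0, c1, c2 - 1, 0] : Fin 4 → ℝ)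
              - (c2 - 1) • (![0, c1 - 1, c2, 0] : Fin 4 → ℝ) = d • va := by
            ext i; fin_cases i <;> simp [va, hddef] <;> ring
          rw [he] at h
          have h' := I.smul_mem d⁻¹ h
          rwa [smul_smul, inv_mul_cancel₀ hd, one_smul] at h'
        have hvb : vb ∈ I := by
          have h := I.sub_mem (I.smul_mem c1 hu2) (I.smul_mem (c1 - 1) hu1)
          have he : c1 • (![0, c1 - 1, c2, 0] : Fin 4 → ℝ)
              - (c1 - 1) • (![0, c1, c2 - 1, 0] : Fin 4 → ℝ) = d • vb := by
            ext i; fin_cases i <;> simp [vb, hddef] <;> ring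
          rw [he] at h
          have h' := I.smul_mem d⁻¹ h
          rwa [smul_smul, inv_mul_cancel₀ hd, one_smul] at h'
        have hvab : vab ∈ I := by
          have h := I.sub_mem (hI va vb hvb) (I.add_mem (I.smul_mem c1 hva) (I.smul_mem c2 hvb))
          have he : Bmul l β va vb - (c1 • va + c2 • vb) = vab := by
            ext i; fin_cases i <;> simp [Bmul, va, vb, vab, hc1def, hc2def]
          rwa [he] at h
        apply le_antisymm
        · intro v hv
          exact (mem_span3 v).mpr (hA v hv)
        · intro v hv
          have h0 := (mem_span3 v).mp hv
          have hv' : v = v 1 • va + v 2 • vb + v 3 • vab := by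
            ext i; fin_cases i <;> simp [va, vb, vab, h0]
          rw [hv']
          exact I.add_mem (I.add_mem (I.smul_mem _ hva) (I.smul_mem _ hvb)) (I.smul_mem _ hvab)
      · push_neg at hB
        by_cases hbot : I = ⊥
        · left; exact hbot
        · right; left
          apply le_antisymm
          · intro v hv
            exact (mem_span1 v).mpr ⟨hA v hv, (hB v hv).1, (hB v hv).2⟩
          · obtain ⟨y, hy, hyne⟩ := (Submodule.ne_bot_iff I).mp hbot
            have hy3 : y 3 ≠ 0 := by
              intro h3
              apply hyne
              ext i; fin_cases i <;>
                simp [hA y hy, (hB y hy).1, (hB y hy).2, h3]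
            have hvab : vab ∈ I := by
              have h := I.smul_mem (y 3)⁻¹ hy
              have he : (y 3)⁻¹ • y = vab := by
                ext i; fin_cases i <;>
                  simp [vab, hA y hy, (hB y hy).1, (hB y hy).2, inv_mul_cancel₀ hy3]
              rwa [he] at h
            rw [Submodule.span_le]
            rintro x rfl
            exact hvab
  · rintro (rfl | rfl | rfl | rfl)
    · intro x y hy
      rw [Submodule.mem_bot] at hy ⊢
      subst hy
      ext i; fin_cases i <;> simp [Bmul]
    · intro x y hy
      obtain ⟨h0, h1', h2'⟩ := (mem_span1 y).mp hy
      refine (mem_span1 _).mpr ⟨?_, ?_, ?_⟩ <;> simp [Bmul, h0, h1', h2']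
    · intro x y hy
      have h0 := (mem_span3 y).mp hy
      exact (mem_span3 _).mpr (by simp [Bmul, h0])
    · intro x y _
      trivial
end

section
/- If β = λ and λ ≠ 1/2, then the ideals of B'(λ,λ) are exactly the five subspaces: {0}, span{ab}, span{b, ab}, span{a, b, ab}, and B'(λ,λ) itself; in particular they form a chain under inclusion. -/
/-! In the basis `o, a, b, ab`, let `V k` be the subspace of vectors whose first `k` coordinates
vanish. For `β = λ` the `i`-th coordinate of `x ∘ y` only involves `y₀, …, yᵢ`, so each `V k` is an
ideal. Conversely, if an ideal contains a vector whose first nonzero coordinate is `k`, multiplying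
it by `o`, `a` and `b` produces one whose first nonzero coordinate is `k + 1`; by descending
induction the ideal contains `V k`. Hence every ideal is some `V k`, and these form a chain. -/

section VanishingBelow

variable (R : Type*) [Semiring R] (n : ℕ)

def vanishingBelow (k : ℕ) : Submodule R (Fin n → R) :=
  Submodule.pi {i | (i : ℕ) < k} fun _ => ⊥

variable {R n}

def IsFirstNonzero (x : Fin n → R) (k : ℕ) : Prop :=
  x ∈ vanishingBelow R n k ∧ x ∉ vanishingBelow R n (k + 1)

variable {k : ℕ} {x : Fin n → R}

@[simp]
theorem mem_vanishingBelow : x ∈ vanishingBelow R n k ↔ ∀ i : Fin n, (i : ℕ) < k → x i = 0 :=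
  Submodule.mem_pi

@[simp]
theorem vanishingBelow_zero : vanishingBelow R n 0 = ⊤ :=
  Submodule.eq_top_iff'.2 fun _ => by simp

theorem vanishingBelow_of_le (h : n ≤ k) : vanishingBelow R n k = ⊥ :=
  (Submodule.eq_bot_iff _).2 fun x hx => funext fun i => (mem_vanishingBelow.1 hx) i (by omega)

theorem mem_vanishingBelow_succ :
    x ∈ vanishingBelow R n (k + 1) ↔ x ∈ vanishingBelow R n k ∧ ∀ h : k < n, x ⟨k, h⟩ = 0 := by
  simp only [mem_vanishingBelow]
  refine ⟨fun hx => ⟨fun i hi => hx i (by omega), fun h => hx _ (by simp)⟩, ?_⟩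
  rintro ⟨hx, hk⟩ i hi
  rcases Nat.lt_succ_iff_lt_or_eq.1 hi with hi | rfl
  · exact hx i hi
  · exact hk i.isLt

theorem vanishingBelow_antitone : Antitone (vanishingBelow R n) :=
  fun _ _ hjk _ hx => mem_vanishingBelow.2 fun i hi => mem_vanishingBelow.1 hx i (by omega)

theorem isFirstNonzero_iff :
    IsFirstNonzero x k ↔ x ∈ vanishingBelow R n k ∧ ∃ h : k < n, x ⟨k, h⟩ ≠ 0 := by
  simp only [IsFirstNonzero, mem_vanishingBelow_succ, not_and, not_forall]
  exact and_congr_right fun hx => imp_iff_right hx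

end VanishingBelow

section DivisionRing

variable {K : Type*} [DivisionRing K] {n k : ℕ} {I : Submodule K (Fin n → K)} {y : Fin n → K}

theorem vanishingBelow_le_of_isFirstNonzero (hyI : y ∈ I) (hy : IsFirstNonzero y k)
    (hI : vanishingBelow K n (k + 1) ≤ I) : vanishingBelow K n k ≤ I := by
  obtain ⟨hyk, hk, hy0⟩ := isFirstNonzero_iff.1 hy
  intro x hx
  have hrest : x - (x ⟨k, hk⟩ / y ⟨k, hk⟩) • y ∈ vanishingBelow K n (k + 1) :=
    mem_vanishingBelow_succ.2 ⟨sub_mem hx (Submodule.smul_mem _ _ hyk), fun _ => by simp [hy0]⟩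
  simpa using add_mem (hI hrest) (I.smul_mem (x ⟨k, hk⟩ / y ⟨k, hk⟩) hyI)

theorem vanishingBelow_le_of_descent
    (hdesc : ∀ k, k + 1 < n → ∀ y ∈ I, IsFirstNonzero y k → ∃ z ∈ I, IsFirstNonzero z (k + 1))
    (hyI : y ∈ I) (hy : IsFirstNonzero y k) : vanishingBelow K n k ≤ I := by
  induction hm : n - k generalizing k y with
  | zero =>
    obtain ⟨hk, -⟩ := (isFirstNonzero_iff.1 hy).2
    omega
  | succ m ih =>
    refine vanishingBelow_le_of_isFirstNonzero hyI hy ?_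
    by_cases hk : k + 1 < n
    · obtain ⟨z, hzI, hz⟩ := hdesc k hk y hyI hy
      exact ih hzI hz (by omega)
    · simp [vanishingBelow_of_le (not_lt.1 hk)]

theorem exists_eq_vanishingBelow_of_forall_le
    (habs : ∀ k, ∀ y ∈ I, IsFirstNonzero y k → vanishingBelow K n k ≤ I) :
    ∃ k, I = vanishingBelow K n k := by
  suffices h : ∀ k, I ≤ vanishingBelow K n k ∨ ∃ j, I = vanishingBelow K n j by
    refine (h n).elim (fun hn => ⟨n, ?_⟩) id
    rw [vanishingBelow_of_le le_rfl] at hn ⊢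
    exact le_bot_iff.1 hn
  intro k
  induction k with
  | zero => simp
  | succ k ih =>
    refine ih.elim (fun hk => ?_) Or.inr
    by_cases hk' : I ≤ vanishingBelow K n (k + 1)
    · exact Or.inl hk'
    · obtain ⟨y, hyI, hy'⟩ := SetLike.not_le_iff_exists.1 hk'
      exact Or.inr ⟨k, le_antisymm hk (habs k y hyI ⟨hk hyI, hy'⟩)⟩

end DivisionRing

section Ideals

variable {l : ℝ} {I : Submodule ℝ (Fin 4 → ℝ)} {y : Fin 4 → ℝ}

theorem bmul_mem_vanishingBelow (l : ℝ) (x : Fin 4 → ℝ) {k : ℕ}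
    (hy : y ∈ vanishingBelow ℝ 4 k) : Bmul l l x y ∈ vanishingBelow ℝ 4 k := by
  rw [mem_vanishingBelow] at hy ⊢
  intro i hi
  have h : ∀ j : Fin 4, j ≤ i → y j = 0 := fun j hj => hy j (lt_of_le_of_lt hj hi)
  fin_cases i <;> simp [Bmul, h 0, h 1, h 2]

theorem isIdeal_vanishingBelow (l : ℝ) (k : ℕ) : IsIdeal l l (vanishingBelow ℝ 4 k) :=
  fun x _ => bmul_mem_vanishingBelow l x

theorem IsIdeal.exists_isFirstNonzero_one (hl0 : l ≠ 0) (hl1 : l ≠ 1) (hI : IsIdeal l l I)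
    (hyI : y ∈ I) (hy : IsFirstNonzero y 0) : ∃ z ∈ I, IsFirstNonzero z 1 := by
  have hy0 : y 0 ≠ 0 := by simpa [isFirstNonzero_iff] using hy
  -- `o ∘ p - λ p = (1 - λ) y₀ o` and `a ∘ o = λ a`
  set p := Bmul l l vo y
  have hp : p ∈ I := hI vo y hyI
  refine ⟨Bmul l l va (Bmul l l vo p - l • p), hI _ _ (sub_mem (hI _ _ hp) (I.smul_mem l hp)), ?_⟩
  simp [isFirstNonzero_iff, p, Bmul, vo, va, ← one_sub_mul, sub_eq_zero, hl0, hy0, hl1.symm]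

theorem IsIdeal.exists_isFirstNonzero_two (hl0 : l ≠ 0) (hl1 : l ≠ 1) (hl : l ≠ 1 / 2)
    (hI : IsIdeal l l I) (hyI : y ∈ I) (hy : IsFirstNonzero y 1) :
    ∃ z ∈ I, IsFirstNonzero z 2 := by
  obtain ⟨hy0, hy1⟩ : y 0 = 0 ∧ y 1 ≠ 0 := by simpa [isFirstNonzero_iff] using hy
  have hc : (l + l - 1) / l ≠ 0 := div_ne_zero (by contrapose! hl; linarith) hl0
  have hc1 : (l + l - 1) / l - 1 ≠ 0 := by
    rw [div_sub_one hl0]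
    exact div_ne_zero (by contrapose! hl1; linarith) hl0
  -- with `c = (2λ - 1) / λ`: `b ∘ y` has `b`-coordinate `y₂ + c y₁`, `a ∘ y - y` has `(c - 1) y₂`
  by_cases hy2 : y 2 = 0
  · exact ⟨Bmul l l vb y, hI vb y hyI, by
      simp [isFirstNonzero_iff, Fin.forall_fin_succ, Bmul, vb, hy0, hy2, hc, hy1]⟩
  · exact ⟨Bmul l l va y - y, sub_mem (hI va y hyI) hyI,
      by simp [isFirstNonzero_iff, Fin.forall_fin_succ, Bmul, va, Matrix.vecHead, Matrix.vecTail, hy0,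
        ← sub_one_mul, hc1, hy2]⟩

theorem IsIdeal.exists_isFirstNonzero_three (hI : IsIdeal l l I) (hyI : y ∈ I)
    (hy : IsFirstNonzero y 2) : ∃ z ∈ I, IsFirstNonzero z 3 := by
  obtain ⟨⟨hy0, hy1⟩, hy2⟩ : (y 0 = 0 ∧ y 1 = 0) ∧ y 2 ≠ 0 := by
    simpa [isFirstNonzero_iff, Fin.forall_fin_succ] using hy
  -- `b ∘ y = y₂ b` and `a ∘ b = c b + ab`
  set p := Bmul l l vb y
  have hp : p ∈ I := hI vb y hyI
  refine ⟨Bmul l l va p - ((l + l - 1) / l) • p, sub_mem (hI va p hp) (I.smul_mem _ hp), ?_⟩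
  simp [isFirstNonzero_iff, Fin.forall_fin_succ, p, Bmul, va, vb, hy0, hy1, hy2]

theorem isIdeal_iff_exists_eq_vanishingBelow (hl0 : l ≠ 0) (hl1 : l ≠ 1) (hl : l ≠ 1 / 2) :
    IsIdeal l l I ↔ ∃ k, I = vanishingBelow ℝ 4 k := by
  refine ⟨fun hI => exists_eq_vanishingBelow_of_forall_le fun _ _ hyI hy =>
    vanishingBelow_le_of_descent ?_ hyI hy, ?_⟩
  · intro k hk y hyI hy
    have hk : k ≤ 2 := by omega
    interval_cases k
    · exact hI.exists_isFirstNonzero_one hl0 hl1 hyI hy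
    · exact hI.exists_isFirstNonzero_two hl0 hl1 hl hyI hy
    · exact hI.exists_isFirstNonzero_three hyI hy
  · rintro ⟨k, rfl⟩
    exact isIdeal_vanishingBelow l k

end Ideals

open Submodule

theorem span_vab : span ℝ {vab} = vanishingBelow ℝ 4 3 := by
  refine le_antisymm (span_le.2 ?_) (vanishingBelow_le_of_isFirstNonzero (subset_span rfl) ?_ ?_)
  · simp [Fin.forall_fin_succ, vab]
  · simp [isFirstNonzero_iff, Fin.forall_fin_succ, vab]
  · simp [vanishingBelow_of_le]

theorem span_vb_vab : span ℝ {vb, vab} = vanishingBelow ℝ 4 2 := by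
  refine le_antisymm (span_le.2 ?_)
    (vanishingBelow_le_of_isFirstNonzero (subset_span (Set.mem_insert _ _)) ?_ ?_)
  · simp [Set.insert_subset_iff, Fin.forall_fin_succ, vb, vab]
  · simp [isFirstNonzero_iff, Fin.forall_fin_succ, vb]
  · exact span_vab ▸ span_mono (Set.subset_insert _ _)

theorem span_va_vb_vab : span ℝ {va, vb, vab} = vanishingBelow ℝ 4 1 := by
  refine le_antisymm (span_le.2 ?_)
    (vanishingBelow_le_of_isFirstNonzero (subset_span (Set.mem_insert _ _)) ?_ ?_)
  · simp [Set.insert_subset_iff, va, vb, vab]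
  · simp [isFirstNonzero_iff, va]
  · exact span_vb_vab ▸ span_mono (Set.subset_insert _ _)

theorem exists_eq_vanishingBelow_iff {I : Submodule ℝ (Fin 4 → ℝ)} :
    (∃ k, I = vanishingBelow ℝ 4 k) ↔ I = ⊥ ∨ I = span ℝ {vab} ∨ I = span ℝ {vb, vab} ∨
      I = span ℝ {va, vb, vab} ∨ I = ⊤ := by
  rw [span_vab, span_vb_vab, span_va_vb_vab, ← vanishingBelow_zero (R := ℝ) (n := 4)]
  constructor
  · rintro ⟨k, rfl⟩
    match k with
    | 0 => simp
    | 1 => simp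
    | 2 => simp
    | 3 => simp
    | k + 4 => simp [vanishingBelow_of_le (show 4 ≤ k + 4 by omega)]
  · rintro (h | h | h | h | h)
    · exact ⟨4, h.trans (vanishingBelow_of_le le_rfl).symm⟩
    all_goals exact ⟨_, h⟩

theorem stmt_12_general (l β : ℝ) (hl0 : 0 < l) (hl1 : l < 1)
    (hβ : β = l) (hl : l ≠ 1 / 2) :
    (∀ I : Submodule ℝ (Fin 4 → ℝ),
      IsIdeal l β I ↔
        (I = ⊥ ∨ I = Submodule.span ℝ ({vab} : Set (Fin 4 → ℝ)) ∨
         I = Submodule.span ℝ ({vb, vab} : Set (Fin 4 → ℝ)) ∨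
         I = Submodule.span ℝ ({va, vb, vab} : Set (Fin 4 → ℝ)) ∨ I = ⊤)) ∧
    (∀ I J : Submodule ℝ (Fin 4 → ℝ), IsIdeal l β I → IsIdeal l β J → I ≤ J ∨ J ≤ I) := by
  subst β
  have classify := fun I => isIdeal_iff_exists_eq_vanishingBelow (I := I) hl0.ne' hl1.ne hl
  refine ⟨fun I => (classify I).trans exists_eq_vanishingBelow_iff, fun I J hI hJ => ?_⟩
  obtain ⟨j, rfl⟩ := (classify I).1 hI
  obtain ⟨k, rfl⟩ := (classify J).1 hJ
  exact (le_total k j).imp (fun h => vanishingBelow_antitone h) fun h => vanishingBelow_antitone h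

/-- If `β = l` and `l ≠ 1/2`, the ideals of `B'(l, l)` are exactly `{0}`, `span {ab}`,
`span {b, ab}`, `span {a, b, ab}` and the whole algebra; in particular they form a chain
under inclusion. -/
theorem stmt_12 (l β : ℝ) (hl0 : 0 < l) (hl1 : l < 1) (hβ0 : 0 < β) (hβ1 : β < 1)
    (hβ : β = l) (hl : l ≠ 1 / 2) :
    (∀ I : Submodule ℝ (Fin 4 → ℝ),
      IsIdeal l β I ↔
        (I = ⊥ ∨ I = Submodule.span ℝ ({vab} : Set (Fin 4 → ℝ)) ∨
         I = Submodule.span ℝ ({vb, vab} : Set (Fin 4 → ℝ)) ∨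
         I = Submodule.span ℝ ({va, vb, vab} : Set (Fin 4 → ℝ)) ∨ I = ⊤)) ∧
    (∀ I J : Submodule ℝ (Fin 4 → ℝ), IsIdeal l β I → IsIdeal l β J → I ≤ J ∨ J ≤ I) :=
  stmt_12_general l β hl0 hl1 hβ hl
end

section
/- For admissible parameters (λ,β) and (λ',β'), the algebras B'(λ,β) and B'(λ',β') are isomorphic as ℝ-algebras (i.e., there exists a linear bijection φ with φ(x∘'y) = φ(x)∘φ(y)) if and only if λ' = λ and (β' = β or β' = 1−β); in particular, if (λ',β') ≠ (λ,β) then they are isomorphic if and only if λ' = λ and β' = 1−β, an isomorphism being given by the basis change (o, a, b, ab) ↦ (o, b, a, ab). -/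
/-- `B'(l', β')` and `B'(l, β)` are isomorphic as (nonassociative) ℝ-algebras:
there is a linear bijection `φ` with `φ(x ∘' y) = φ(x) ∘ φ(y)`. -/
noncomputable def BIso (l' β' l β : ℝ) : Prop :=
  ∃ φ : (Fin 4 → ℝ) ≃ₗ[ℝ] (Fin 4 → ℝ),
    ∀ x y : Fin 4 → ℝ, φ (Bmul l' β' x y) = Bmul l β (φ x) (φ y)

section Multiplication

variable (l β : ℝ)

lemma Bmul_comm (x y : Fin 4 → ℝ) : Bmul l β x y = Bmul l β y x := by
  funext i; fin_cases i <;> simp [Bmul] <;> ring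

lemma Bmul_vo_vo : Bmul l β vo vo = vo := by funext i; fin_cases i <;> simp [Bmul, vo]
lemma Bmul_vo_va : Bmul l β vo va = l • va := by funext i; fin_cases i <;> simp [Bmul, vo, va]
lemma Bmul_vo_vb : Bmul l β vo vb = l • vb := by funext i; fin_cases i <;> simp [Bmul, vo, vb]
lemma Bmul_va_va : Bmul l β va va = va := by funext i; fin_cases i <;> simp [Bmul, va]
lemma Bmul_vb_vb : Bmul l β vb vb = vb := by funext i; fin_cases i <;> simp [Bmul, vb]
lemma Bmul_va_vb : Bmul l β va vb = ((l - β) / l) • va + ((l + β - 1) / l) • vb + vab := by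
  funext i; fin_cases i <;> simp [Bmul, va, vb, vab]
lemma Bmul_va_vab : Bmul l β va vab = 0 := by funext i; fin_cases i <;> simp [Bmul, va, vab]

end Multiplication

structure IsEigenIdempotent (l β μ : ℝ) (g e : Fin 4 → ℝ) : Prop where
  apply_zero : e 0 = 0
  ne_zero : e ≠ 0
  idem : Bmul l β e e = e
  eigen : Bmul l β g e = μ • e

section Idempotents

variable {l β : ℝ}

lemma idem_apply_three {e : Fin 4 → ℝ} (he : Bmul l β e e = e) : e 3 = 2 * e 1 * e 2 := by
  have h3 : e 1 * e 2 + e 2 * e 1 = e 3 := congrFun he 3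
  linear_combination -h3

lemma eq_of_idem {e : Fin 4 → ℝ} (he0 : e 0 = 0) (he : Bmul l β e e = e) :
    e = ![0, e 1, e 2, 2 * e 1 * e 2] := by
  funext i; fin_cases i <;> simp [he0, idem_apply_three he]

lemma idem_apply_zero_eq_zero {g e : Fin 4 → ℝ} {μ : ℝ} (hμ0 : μ ≠ 0) (hμ1 : μ ≠ 1)
    (hg : Bmul l β g g = g) (he : Bmul l β e e = e) (hge : Bmul l β g e = μ • e) :
    e 0 = 0 := by
  have hg0 : g 0 * g 0 = g 0 := congrFun hg 0
  have he0 : e 0 * e 0 = e 0 := congrFun he 0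
  have hge0 : g 0 * e 0 = μ * e 0 := congrFun hge 0
  by_contra hne
  have he1 : e 0 = 1 := (IsIdempotentElem.iff_eq_zero_or_one.mp he0).resolve_left hne
  have hgμ : g 0 = μ := by simpa [he1] using hge0
  rw [hgμ] at hg0
  exact hμ1 ((IsIdempotentElem.iff_eq_zero_or_one.mp hg0).resolve_left hμ0)

lemma idem_coords {e : Fin 4 → ℝ} (he0 : e 0 = 0) (he : Bmul l β e e = e) :
    e 1 * e 1 + 2 * ((l - β) / l) * e 1 * e 2 = e 1 ∧
      e 2 * e 2 + 2 * ((l + β - 1) / l) * e 1 * e 2 = e 2 := by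
  have h1 := congrFun he 1
  have h2 := congrFun he 2
  simp only [Bmul, Matrix.cons_val, he0] at h1 h2
  exact ⟨by linear_combination h1, by linear_combination h2⟩

lemma idem_trichotomy {e : Fin 4 → ℝ} (he0 : e 0 = 0) (hne : e ≠ 0) (he : Bmul l β e e = e) :
    e = va ∨ e = vb ∨ (e 1 ≠ 0 ∧ e 2 ≠ 0) := by
  have he_eq := eq_of_idem he0 he
  obtain ⟨h1, h2⟩ := idem_coords he0 he
  have unit_of_idem {x : ℝ} (hx : x * x = x) (hx0 : x ≠ 0) : x = 1 :=
    (IsIdempotentElem.iff_eq_zero_or_one.mp hx).resolve_left hx0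
  by_cases he1 : e 1 = 0
  · have he2 : e 2 ≠ 0 := fun he2 => hne (by rw [he_eq, he1, he2]; simp)
    right; left
    rw [he_eq, he1, unit_of_idem (by simpa [he1] using h2) he2]
    simp [vb]
  by_cases he2 : e 2 = 0
  · left
    rw [he_eq, he2, unit_of_idem (by simpa [he2] using h1) he1]
    simp [va]
  exact Or.inr (Or.inr ⟨he1, he2⟩)

lemma mixed_idem_linear {e : Fin 4 → ℝ} (he0 : e 0 = 0) (he : Bmul l β e e = e)
    (he1 : e 1 ≠ 0) (he2 : e 2 ≠ 0) :
    e 1 + 2 * ((l - β) / l) * e 2 = 1 ∧ 2 * ((l + β - 1) / l) * e 1 + e 2 = 1 := by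
  obtain ⟨h1, h2⟩ := idem_coords he0 he
  exact ⟨mul_left_cancel₀ he1 (by linear_combination h1),
    mul_left_cancel₀ he2 (by linear_combination h2)⟩

/-- If the linear system of `mixed_idem_linear` is singular, it is solvable only when both
structure constants equal `1/2`, which forces `l = 1`. -/
lemma mixed_idem_unique (hl0 : l ≠ 0) (hl1 : l ≠ 1) {e f : Fin 4 → ℝ}
    (he0 : e 0 = 0) (he : Bmul l β e e = e) (he1 : e 1 ≠ 0) (he2 : e 2 ≠ 0)
    (hf0 : f 0 = 0) (hf : Bmul l β f f = f) (hf1 : f 1 ≠ 0) (hf2 : f 2 ≠ 0) : e = f := by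
  obtain ⟨ke1, ke2⟩ := mixed_idem_linear he0 he he1 he2
  obtain ⟨kf1, kf2⟩ := mixed_idem_linear hf0 hf hf1 hf2
  set c := (l - β) / l with hc
  set d := (l + β - 1) / l with hd
  have hcd : c + d = 2 - 1 / l := by rw [hc, hd]; field_simp; ring
  have h11 : e 1 = f 1 := by
    have hdet : (1 - 4 * c * d) * (e 1 - f 1) = 0 := by
      linear_combination ke1 - kf1 - 2 * c * (ke2 - kf2)
    refine sub_eq_zero.mp ((mul_eq_zero.mp hdet).resolve_left fun hsing => hl1 ?_)
    have hc2 : 2 * c = 1 := by linear_combination ke1 - 2 * c * ke2 - e 1 * hsing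
    have hd2 : 2 * d = 1 := by linear_combination ke2 - 2 * d * ke1 - e 2 * hsing
    have : 1 / l = 1 := by linear_combination hcd - hc2 / 2 - hd2 / 2
    simpa using this
  have h22 : e 2 = f 2 := by linear_combination ke2 - kf2 - 2 * d * h11
  rw [eq_of_idem he0 he, eq_of_idem hf0 hf, h11, h22]

end Idempotents

section Eigenvectors

variable {l β μ : ℝ} {g e : Fin 4 → ℝ}

lemma eigen_va_coords (h : Bmul l β g va = μ • va) : g 2 = 0 ∧ l * g 0 + g 1 = μ := by
  have h1 : l * g 0 + g 1 + (l - β) / l * g 2 = μ := by simpa [Bmul, va] using congrFun h 1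
  have h3 : g 2 = 0 := by simpa [Bmul, va] using congrFun h 3
  exact ⟨h3, by simpa [h3] using h1⟩

lemma eigen_vb_coords (h : Bmul l β g vb = μ • vb) : g 1 = 0 ∧ l * g 0 + g 2 = μ := by
  have h2 : l * g 0 + g 2 + (l + β - 1) / l * g 1 = μ := by simpa [Bmul, vb] using congrFun h 2
  have h3 : g 1 = 0 := by simpa [Bmul, vb] using congrFun h 3
  exact ⟨h3, by simpa [h3] using h2⟩

lemma not_eigen_va_of_mixed (hl : l ≠ 0) (hβ1 : β ≠ 1) (hμ : μ ≠ 0)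
    (he : IsEigenIdempotent l β μ g e) (he1 : e 1 ≠ 0) (he2 : e 2 ≠ 0) :
    Bmul l β g va ≠ μ • va := by
  intro hga
  obtain ⟨hg2, hsum⟩ := eigen_va_coords hga
  have h2 : l * g 0 * e 2 + (l + β - 1) / l * (g 1 * e 2) = μ * e 2 := by
    simpa [Bmul, hg2, he.apply_zero, mul_assoc] using congrFun he.eigen 2
  have h3 : g 1 * e 2 = μ * e 3 := by simpa [Bmul, hg2] using congrFun he.eigen 3
  have hg1 : g 1 = 2 * μ * e 1 :=
    mul_right_cancel₀ he2 (by linear_combination h3 + μ * idem_apply_three he.idem)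
  have hd : l * g 0 + (l + β - 1) / l * g 1 = μ :=
    mul_right_cancel₀ he2 (by linear_combination h2)
  have hd1 : (l + β - 1) / l - 1 ≠ 0 := by
    rw [sub_ne_zero, Ne, div_eq_one_iff_eq hl]
    exact fun h => hβ1 (by linarith)
  have : ((l + β - 1) / l - 1) * (2 * μ * e 1) = 0 := by
    linear_combination hd - hsum - ((l + β - 1) / l - 1) * hg1
  simp [hd1, hμ, he1] at this

lemma not_eigen_vb_of_mixed (hl : l ≠ 0) (hβ0 : β ≠ 0) (hμ : μ ≠ 0)
    (he : IsEigenIdempotent l β μ g e) (he1 : e 1 ≠ 0) (he2 : e 2 ≠ 0) :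
    Bmul l β g vb ≠ μ • vb := by
  intro hgb
  obtain ⟨hg1, hsum⟩ := eigen_vb_coords hgb
  have h1 : l * g 0 * e 1 + (l - β) / l * (g 2 * e 1) = μ * e 1 := by
    simpa [Bmul, hg1, he.apply_zero, mul_assoc] using congrFun he.eigen 1
  have h3 : g 2 * e 1 = μ * e 3 := by simpa [Bmul, hg1] using congrFun he.eigen 3
  have hg2 : g 2 = 2 * μ * e 2 :=
    mul_right_cancel₀ he1 (by linear_combination h3 + μ * idem_apply_three he.idem)
  have hc : l * g 0 + (l - β) / l * g 2 = μ :=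
    mul_right_cancel₀ he1 (by linear_combination h1)
  have hc1 : (l - β) / l - 1 ≠ 0 := by
    rw [sub_ne_zero, Ne, div_eq_one_iff_eq hl]
    exact fun h => hβ0 (by linarith)
  have : ((l - β) / l - 1) * (2 * μ * e 2) = 0 := by
    linear_combination hc - hsum - ((l - β) / l - 1) * hg2
  simp [hc1, hμ, he2] at this

lemma IsEigenIdempotent.eq_va_vb (hl0 : l ≠ 0) (hl1 : l ≠ 1) (hβ0 : β ≠ 0) (hβ1 : β ≠ 1)
    (hμ : μ ≠ 0) {f : Fin 4 → ℝ} (he : IsEigenIdempotent l β μ g e)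
    (hf : IsEigenIdempotent l β μ g f) (hef : e ≠ f) :
    (e = va ∧ f = vb) ∨ (e = vb ∧ f = va) := by
  rcases idem_trichotomy he.apply_zero he.ne_zero he.idem with rfl | rfl | ⟨he1, he2⟩ <;>
    rcases idem_trichotomy hf.apply_zero hf.ne_zero hf.idem with rfl | rfl | ⟨hf1, hf2⟩
  · exact absurd rfl hef
  · exact Or.inl ⟨rfl, rfl⟩
  · exact absurd he.eigen (not_eigen_va_of_mixed hl0 hβ1 hμ hf hf1 hf2)
  · exact Or.inr ⟨rfl, rfl⟩
  · exact absurd rfl hef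
  · exact absurd he.eigen (not_eigen_vb_of_mixed hl0 hβ0 hμ hf hf1 hf2)
  · exact absurd hf.eigen (not_eigen_va_of_mixed hl0 hβ1 hμ he he1 he2)
  · exact absurd hf.eigen (not_eigen_vb_of_mixed hl0 hβ0 hμ he he1 he2)
  · exact absurd (mixed_idem_unique hl0 hl1 he.apply_zero he.idem he1 he2
      hf.apply_zero hf.idem hf1 hf2) hef

lemma eq_of_eigen_va_vb (hμ : μ ≠ 0) (hg : Bmul l β g g = g)
    (ha : Bmul l β g va = μ • va) (hb : Bmul l β g vb = μ • vb) : μ = l := by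
  obtain ⟨hg2, hsum⟩ := eigen_va_coords ha
  obtain ⟨hg1, -⟩ := eigen_vb_coords hb
  have hg0 : g 0 * g 0 = g 0 := congrFun hg 0
  have hg0_ne : g 0 ≠ 0 := fun h => hμ (by rw [← hsum, h, hg1]; ring)
  have hg0_one : g 0 = 1 := (IsIdempotentElem.iff_eq_zero_or_one.mp hg0).resolve_left hg0_ne
  rw [← hsum, hg0_one, hg1]
  ring

end Eigenvectors

section Isomorphisms

variable {l β l' β' : ℝ} {φ : (Fin 4 → ℝ) ≃ₗ[ℝ] (Fin 4 → ℝ)}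

lemma isEigenIdempotent_map (hφ : ∀ x y, φ (Bmul l' β' x y) = Bmul l β (φ x) (φ y))
    (hl0' : l' ≠ 0) (hl1' : l' ≠ 1) {v : Fin 4 → ℝ} (hv : v ≠ 0)
    (hvv : Bmul l' β' v v = v) (hov : Bmul l' β' vo v = l' • v) :
    IsEigenIdempotent l β l' (φ vo) (φ v) := by
  have idem : Bmul l β (φ v) (φ v) = φ v := by rw [← hφ, hvv]
  have eigen : Bmul l β (φ vo) (φ v) = l' • φ v := by rw [← hφ, hov, map_smul]
  have hG : Bmul l β (φ vo) (φ vo) = φ vo := by rw [← hφ, Bmul_vo_vo]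
  exact ⟨idem_apply_zero_eq_zero hl0' hl1' hG idem eigen,
    (map_ne_zero_iff φ φ.injective).mpr hv, idem, eigen⟩

lemma div_eq_of_map_va_vb (hφ : ∀ x y, φ (Bmul l' β' x y) = Bmul l β (φ x) (φ y))
    (ha : φ va = va) (hb : φ vb = vb) : (l' + β' - 1) / l' = (l + β - 1) / l := by
  have hab := hφ va vb
  rw [Bmul_va_vb, map_add, map_add, map_smul, map_smul, ha, hb, Bmul_va_vb] at hab
  have hann : Bmul l β va (φ vab) = 0 := by rw [← ha, ← hφ, Bmul_va_vab, map_zero]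
  have h2 : (l' + β' - 1) / l' + φ vab 2 = (l + β - 1) / l := by
    simpa [va, vb, vab] using congrFun hab 2
  have h3 : φ vab 2 = 0 := by simpa [Bmul, va] using congrFun hann 3
  linear_combination h2 - h3

lemma div_eq_of_map_va_vb_swap (hφ : ∀ x y, φ (Bmul l' β' x y) = Bmul l β (φ x) (φ y))
    (ha : φ va = vb) (hb : φ vb = va) : (l' + β' - 1) / l' = (l - β) / l := by
  have hab := hφ va vb
  rw [Bmul_va_vb, map_add, map_add, map_smul, map_smul, ha, hb, Bmul_comm, Bmul_va_vb] at hab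
  have hann : Bmul l β vb (φ vab) = 0 := by rw [← ha, ← hφ, Bmul_va_vab, map_zero]
  have h1 : (l' + β' - 1) / l' + φ vab 1 = (l - β) / l := by
    simpa [va, vb, vab] using congrFun hab 1
  have h3 : φ vab 1 = 0 := by simpa [Bmul, vb] using congrFun hann 3
  linear_combination h1 - h3

end Isomorphisms

theorem BIso.necessary {l β l' β' : ℝ} (hl0 : l ≠ 0) (hl1 : l ≠ 1) (hβ0 : β ≠ 0) (hβ1 : β ≠ 1)
    (hl0' : l' ≠ 0) (hl1' : l' ≠ 1) (h : BIso l' β' l β) :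
    l' = l ∧ (β' = β ∨ β' = 1 - β) := by
  obtain ⟨φ, hφ⟩ := h
  have hE := isEigenIdempotent_map hφ hl0' hl1' (by simp [va]) (Bmul_va_va l' β') (Bmul_vo_va l' β')
  have hF := isEigenIdempotent_map hφ hl0' hl1' (by simp [vb]) (Bmul_vb_vb l' β') (Bmul_vo_vb l' β')
  have hEF : φ va ≠ φ vb := φ.injective.ne fun h => by simpa [va, vb] using congrFun h 1
  have hG : Bmul l β (φ vo) (φ vo) = φ vo := by rw [← hφ, Bmul_vo_vo]
  rcases hE.eq_va_vb hl0 hl1 hβ0 hβ1 hl0' hF hEF with ⟨ha, hb⟩ | ⟨ha, hb⟩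
  · have hll : l' = l := eq_of_eigen_va_vb hl0' hG (ha ▸ hE.eigen) (hb ▸ hF.eigen)
    have hd := div_eq_of_map_va_vb hφ ha hb
    rw [hll, div_left_inj' hl0] at hd
    exact ⟨hll, Or.inl (by linarith)⟩
  · have hll : l' = l := eq_of_eigen_va_vb hl0' hG (hb ▸ hF.eigen) (ha ▸ hE.eigen)
    have hd := div_eq_of_map_va_vb_swap hφ ha hb
    rw [hll, div_left_inj' hl0] at hd
    exact ⟨hll, Or.inr (by linarith)⟩

def swapAB (z : Fin 4 → ℝ) : Fin 4 → ℝ := ![z 0, z 2, z 1, z 3]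

lemma swapAB_Bmul (l β : ℝ) (x y : Fin 4 → ℝ) :
    swapAB (Bmul l (1 - β) x y) = Bmul l β (swapAB x) (swapAB y) := by
  funext i; fin_cases i <;> simp [swapAB, Bmul] <;> ring

lemma BIso.refl (l β : ℝ) : BIso l β l β := ⟨LinearEquiv.refl ℝ _, fun _ _ => rfl⟩

lemma BIso.one_sub (l β : ℝ) : BIso l (1 - β) l β := by
  refine ⟨LinearEquiv.funCongrLeft ℝ ℝ (Equiv.swap 1 2), fun x y => ?_⟩
  have hswap : ⇑(LinearEquiv.funCongrLeft ℝ ℝ (Equiv.swap (1 : Fin 4) 2)) = swapAB := by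
    funext z i; fin_cases i <;> rfl
  rw [hswap]
  exact swapAB_Bmul l β x y

theorem stmt_19_general (l β l' β' : ℝ) (hl0 : 0 < l) (hl1 : l < 1) (hβ0 : 0 < β) (hβ1 : β < 1)
    (hl0' : 0 < l') (hl1' : l' < 1) :
    (BIso l' β' l β ↔ (l' = l ∧ (β' = β ∨ β' = 1 - β))) ∧
    ((l', β') ≠ (l, β) → (BIso l' β' l β ↔ (l' = l ∧ β' = 1 - β))) ∧
    (l' = l → β' = 1 - β →
      ∀ x y : Fin 4 → ℝ,
        (fun z : Fin 4 → ℝ => ![z 0, z 2, z 1, z 3]) (Bmul l' β' x y) =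
          Bmul l β ((fun z : Fin 4 → ℝ => ![z 0, z 2, z 1, z 3]) x)
            ((fun z : Fin 4 → ℝ => ![z 0, z 2, z 1, z 3]) y)) := by
  have hiff : BIso l' β' l β ↔ l' = l ∧ (β' = β ∨ β' = 1 - β) := by
    refine ⟨BIso.necessary hl0.ne' hl1.ne hβ0.ne' hβ1.ne hl0'.ne' hl1'.ne, ?_⟩
    rintro ⟨rfl, rfl | rfl⟩
    exacts [BIso.refl l' β', BIso.one_sub l' β]
  refine ⟨hiff, fun hne => ?_, fun hl hβ => ?_⟩
  · rw [hiff]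
    exact and_congr_right fun hl => or_iff_right fun hβ => hne (by rw [hl, hβ])
  · subst hl hβ
    exact swapAB_Bmul l' β

/-- The algebras `B'(l, β)` and `B'(l', β')` are isomorphic if and only if `l' = l` and
(`β' = β` or `β' = 1 - β`); in particular, if `(l', β') ≠ (l, β)` they are isomorphic if
and only if `l' = l` and `β' = 1 - β`, an isomorphism being given by the basis change
`(o, a, b, ab) ↦ (o, b, a, ab)`. -/
theorem stmt_19 (l β l' β' : ℝ) (hl0 : 0 < l) (hl1 : l < 1) (hβ0 : 0 < β) (hβ1 : β < 1)
    (hl0' : 0 < l') (hl1' : l' < 1) (hβ0' : 0 < β') (hβ1' : β' < 1) :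
    (BIso l' β' l β ↔ (l' = l ∧ (β' = β ∨ β' = 1 - β))) ∧
    ((l', β') ≠ (l, β) → (BIso l' β' l β ↔ (l' = l ∧ β' = 1 - β))) ∧
    (l' = l → β' = 1 - β →
      ∀ x y : Fin 4 → ℝ,
        (fun z : Fin 4 → ℝ => ![z 0, z 2, z 1, z 3]) (Bmul l' β' x y) =
          Bmul l β ((fun z : Fin 4 → ℝ => ![z 0, z 2, z 1, z 3]) x)
            ((fun z : Fin 4 → ℝ => ![z 0, z 2, z 1, z 3]) y)) :=
  stmt_19_general l β l' β' hl0 hl1 hβ0 hβ1 hl0' hl1'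
end
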